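/- arXiv:1311.4759 — 10 statements merged into one kernel-verified Lean document; each statement's English description precedes it below -/
import Mathlib

section
/- For the single-sink capacitated k-facility location instance with zero opening costs and per-unit costs c_i = 1 - 1/s_i (where each s_i > 1), the optimal value Z satisfies Z ≤ d - k if and only if there exists a subset I ⊆ F with |I| = k and ∑_{i∈I} s_i = d. -/
/-!
Writing the cost as `∑ xᵢ - ∑ xᵢ / sᵢ = d - ∑ xᵢ / sᵢ`, the condition `Z ≤ d - k` asks for
`∑ xᵢ / sᵢ ≥ k`. Each ratio `xᵢ / sᵢ` is at most `1` on the open facilities `Y` and `0`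
elsewhere, so `∑ xᵢ / sᵢ ≤ |Y| ≤ k`; equality forces `|Y| = k` and every open facility to be
filled to capacity, whence `∑_{i ∈ Y} sᵢ = d`. Conversely, filling a `k`-set of capacities
summing to `d` costs exactly `∑_{i ∈ I} (sᵢ - 1) = d - k`.
-/

open scoped Classical

open Finset

lemma sum_one_sub_one_div_mul {ι K : Type*} [Field K] (t : Finset ι) (s x : ι → K) :
    ∑ i ∈ t, (1 - 1 / s i) * x i = ∑ i ∈ t, x i - ∑ i ∈ t, x i / s i := by
  rw [← sum_sub_distrib]
  exact sum_congr rfl fun i _ => by ring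

section Ratios

variable {ι : Type*} [Fintype ι] {Y : Finset ι} {s x : ι → ℝ}

lemma sum_ite_mem_div_self (hs : ∀ i, s i ≠ 0) :
    ∑ i, (if i ∈ Y then s i else 0) / s i = Y.card := by
  simp [ite_div, hs]

lemma sum_div_le_card (hs : ∀ i, 0 < s i) (hx : ∀ i, x i ≤ if i ∈ Y then s i else 0) :
    ∑ i, x i / s i ≤ Y.card := by
  rw [← sum_ite_mem_div_self fun i => (hs i).ne']
  exact sum_le_sum fun i _ => div_le_div_of_nonneg_right (hx i) (hs i).le

lemma eq_ite_of_card_le_sum_div (hs : ∀ i, 0 < s i) (hx : ∀ i, x i ≤ if i ∈ Y then s i else 0)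
    (h : (Y.card : ℝ) ≤ ∑ i, x i / s i) (i : ι) : x i = if i ∈ Y then s i else 0 := by
  have hle : ∀ i ∈ univ, x i / s i ≤ (if i ∈ Y then s i else 0) / s i :=
    fun i _ => div_le_div_of_nonneg_right (hx i) (hs i).le
  rw [← sum_ite_mem_div_self fun i => (hs i).ne'] at h
  have := (sum_eq_sum_iff_of_le hle).1 (le_antisymm (sum_le_sum hle) h) i (mem_univ i)
  rwa [div_left_inj' (hs i).ne'] at this

end Ratios

/-- Single-sink CKFL with zero opening costs and c_i = 1 - 1/s_i (s_i > 1):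
the optimal value is ≤ d - k iff there is a k-subset of facilities whose
capacities sum exactly to d. -/
theorem stmt_0 {ι : Type*} [Fintype ι] (s : ι → ℕ) (d k : ℕ)
    (hs : ∀ i, 1 < s i) :
    (∃ (Y : Finset ι) (x : ι → ℝ),
        Y.card ≤ k ∧
        (∀ i, 0 ≤ x i) ∧
        (∀ i, x i ≤ if i ∈ Y then (s i : ℝ) else 0) ∧
        (∑ i, x i) = d ∧
        (∑ i, (1 - 1 / (s i : ℝ)) * x i) ≤ (d : ℝ) - k) ↔
      ∃ I : Finset ι, I.card = k ∧ (∑ i ∈ I, s i) = d := by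
  have hs₀ : ∀ i, (0 : ℝ) < s i := fun i => by exact_mod_cast zero_lt_one.trans (hs i)
  constructor
  · rintro ⟨Y, x, hYk, -, hx, hsum, hcost⟩
    rw [sum_one_sub_one_div_mul, hsum] at hcost
    have hk : (k : ℝ) ≤ ∑ i, x i / s i := by linarith
    have hcard : Y.card = k := by
      have : (k : ℝ) ≤ Y.card := hk.trans (sum_div_le_card hs₀ hx)
      exact le_antisymm hYk (by exact_mod_cast this)
    have hfull := eq_ite_of_card_le_sum_div hs₀ hx (hcard ▸ hk)
    refine ⟨Y, hcard, ?_⟩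
    rw [funext hfull, sum_ite_mem, univ_inter] at hsum
    exact_mod_cast hsum
  · rintro ⟨I, rfl, hI⟩
    have hIℝ : ∑ i ∈ I, (s i : ℝ) = d := by exact_mod_cast hI
    refine ⟨I, fun i => if i ∈ I then (s i : ℝ) else 0, le_rfl, fun i => ?_, fun i => le_rfl,
      ?_, ?_⟩
    · dsimp only; split_ifs <;> positivity
    · rw [sum_ite_mem, univ_inter, hIℝ]
    · rw [sum_one_sub_one_div_mul, sum_ite_mem_div_self fun i => (hs₀ i).ne', sum_ite_mem,
        univ_inter, hIℝ]
end

section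
/- In the instance with four facilities having capacities (s, s, M·s, s+1), zero opening costs, per-unit costs (0, 0, 100, 1), demand d = 2s+1, and k = 2, the optimal integer value equals s+1 while the optimal LP-relaxation value equals 100M/(M−1); hence the integrality gap exceeds (s+1)/200 and is unbounded over instances (for M ≫ s ≫ 100). -/
/-!
Opening at most two facilities integrally, demand `2s+1` cannot be met by facilities 1 and 2
alone, and facility 3 costs at least `100 s`; so the best choice is facilities 1 and 4, shipping
`s + 1` units at unit cost 1. The LP relaxation instead opens facility 2 to the extent `1 - t` and
facility 3 to the extent `t = 1 / (s (M - 1))`, which frees exactly the one missing unit of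
capacity at cost `100 M / (M - 1) < 200`. Its optimality is certified by the LP dual.
-/

open Finset

theorem le_cost_of_dual_feasible {ι : Type*} [Fintype ι] {cap c x y β : ι → ℝ} {d k α l : ℝ}
    (hy : ∀ i, 0 ≤ y i) (hyk : ∑ i, y i ≤ k) (hx : ∀ i, 0 ≤ x i)
    (hxy : ∀ i, x i ≤ cap i * y i) (hxd : ∑ i, x i = d)
    (hβ : ∀ i, 0 ≤ β i) (hl : 0 ≤ l) (hc : ∀ i, α - β i ≤ c i) (hcap : ∀ i, β i * cap i ≤ l) :
    α * d - l * k ≤ ∑ i, c i * x i := by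
  have hreduced : ∑ i, (α - β i) * x i ≤ ∑ i, c i * x i :=
    sum_le_sum fun i _ ↦ mul_le_mul_of_nonneg_right (hc i) (hx i)
  have hslack : ∑ i, β i * x i ≤ l * ∑ i, y i := by
    rw [mul_sum]
    refine sum_le_sum fun i _ ↦ ?_
    calc β i * x i ≤ β i * (cap i * y i) := mul_le_mul_of_nonneg_left (hxy i) (hβ i)
      _ = β i * cap i * y i := (mul_assoc ..).symm
      _ ≤ l * y i := mul_le_mul_of_nonneg_right (hcap i) (hy i)
  have hsplit : ∑ i, (α - β i) * x i = α * d - ∑ i, β i * x i := by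
    simp only [sub_mul, sum_sub_distrib, ← mul_sum, hxd]
  nlinarith [mul_le_mul_of_nonneg_left hyk hl]

namespace GapInstance

abbrev capacity (s M : ℝ) : Fin 4 → ℝ := ![s, s, M * s, s + 1]

abbrev unitCost : Fin 4 → ℝ := ![0, 0, 100, 1]

variable {s M : ℝ} {x y : Fin 4 → ℝ}

theorem integer_witness (hs : 0 ≤ s) :
    ∃ x y : Fin 4 → ℝ, (∀ i, y i = 0 ∨ y i = 1) ∧ ∑ i, y i ≤ 2 ∧ (∀ i, 0 ≤ x i) ∧
      (∀ i, x i ≤ capacity s M i * y i) ∧ ∑ i, x i = 2 * s + 1 ∧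
      s + 1 = ∑ i, unitCost i * x i := by
  refine ⟨![s, 0, 0, s + 1], ![1, 0, 0, 1], ?_, ?_, ?_, ?_, ?_, ?_⟩
  · intro i; fin_cases i <;> simp
  · simp [Fin.sum_univ_four]; norm_num
  · intro i; fin_cases i <;> simp <;> linarith
  · intro i; fin_cases i <;> simp
  · simp [Fin.sum_univ_four]; ring
  · simp [Fin.sum_univ_four]

theorem le_integer_cost (hs : 1 ≤ s) (hy : ∀ i, y i = 0 ∨ y i = 1) (hyk : ∑ i, y i ≤ 2)
    (hx : ∀ i, 0 ≤ x i) (hxy : ∀ i, x i ≤ capacity s M i * y i) (hxd : ∑ i, x i = 2 * s + 1) :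
    s + 1 ≤ ∑ i, unitCost i * x i := by
  have h0 := hxy 0; have h1 := hxy 1; have h2 := hxy 2; have h3 := hxy 3
  simp only [Fin.sum_univ_four] at hyk hxd ⊢
  simp only [Fin.isValue, Matrix.cons_val_zero, Matrix.cons_val_one, Matrix.cons_val]
    at h0 h1 h2 h3 ⊢
  have hy0 : 0 ≤ y 0 := by rcases hy 0 with h | h <;> simp [h]
  have hy1 : 0 ≤ y 1 := by rcases hy 1 with h | h <;> simp [h]
  have hx0 := hx 0; have hx1 := hx 1; have hx2 := hx 2; have hx3 := hx 3
  -- Facilities 1 and 2 may be treated fractionally; only facilities 3 and 4 need a case split.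
  rcases hy 2 with hy2 | hy2 <;> rcases hy 3 with hy3 | hy3 <;> simp only [hy2, hy3] at * <;>
    nlinarith

theorem lp_witness (hs : 0 < s) (hsM : 1 ≤ s * (M - 1)) :
    ∃ x y : Fin 4 → ℝ, (∀ i, 0 ≤ y i ∧ y i ≤ 1) ∧ ∑ i, y i ≤ 2 ∧ (∀ i, 0 ≤ x i) ∧
      (∀ i, x i ≤ capacity s M i * y i) ∧ ∑ i, x i = 2 * s + 1 ∧
      100 * M / (M - 1) = ∑ i, unitCost i * x i := by
  have hM : 0 < M - 1 := by nlinarith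
  obtain ⟨t, hst, ht0, ht1⟩ : ∃ t, s * t * (M - 1) = 1 ∧ 0 ≤ t ∧ t ≤ 1 :=
    ⟨1 / (s * (M - 1)), by field_simp, by positivity, (div_le_one (by positivity)).2 hsM⟩
  let y : Fin 4 → ℝ := ![1, 1 - t, t, 0]
  refine ⟨fun i ↦ capacity s M i * y i, y, ?_, ?_, ?_, fun i ↦ le_rfl, ?_, ?_⟩
  · intro i; fin_cases i <;> simp [y] <;> constructor <;> linarith
  · simp [y, Fin.sum_univ_four]; linarith
  · intro i; fin_cases i <;> simp [y] <;> nlinarith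
  · simp [y, Fin.sum_univ_four]; linear_combination hst
  · simp [y, Fin.sum_univ_four]; rw [div_eq_iff hM.ne']; linear_combination -100 * M * hst

theorem le_lp_cost (hs : 0 ≤ s) (hM : 1 < M) (hsM : 100 * M ≤ (s + 1) * (M - 1))
    (hy : ∀ i, 0 ≤ y i ∧ y i ≤ 1) (hyk : ∑ i, y i ≤ 2)
    (hx : ∀ i, 0 ≤ x i) (hxy : ∀ i, x i ≤ capacity s M i * y i) (hxd : ∑ i, x i = 2 * s + 1) :
    100 * M / (M - 1) ≤ ∑ i, unitCost i * x i := by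
  set α := 100 * M / (M - 1)
  have hM1 : 0 < M - 1 := sub_pos.2 hM
  have hαM : α * (M - 1) = 100 * M := div_mul_cancel₀ _ hM1.ne'
  have h100 : 100 ≤ α := by rw [le_div_iff₀ hM1]; linarith
  have hαs : α ≤ s + 1 := by rwa [div_le_iff₀ hM1]
  -- Dual solution: `β i = α - c i` and `l = α s`, of value `α (2 s + 1) - 2 α s = α`.
  have := le_cost_of_dual_feasible (c := unitCost) (β := ![α, α, α - 100, α - 1]) (α := α)
    (l := α * s) (fun i ↦ (hy i).1) hyk hx hxy hxd ?_ (by positivity) ?_ ?_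
  · linarith
  · intro i; fin_cases i <;> simp <;> linarith
  · intro i; fin_cases i <;> simp
  · intro i; fin_cases i <;> simp <;> nlinarith

end GapInstance

open GapInstance in
/-- The concrete 4-facility instance: capacities (s, s, Ms, s+1), zero opening
costs, unit costs (0,0,100,1), demand 2s+1, k = 2, with M > s > 100.  The
integer optimum is s+1, the LP optimum is 100M/(M-1), hence the integrality
gap exceeds (s+1)/200 (and so is unbounded over instances). -/
theorem stmt_3 (s M : ℕ) (hs : 100 < s) (hM : s < M) :
    let cap : Fin 4 → ℝ := ![s, s, M * s, s + 1]
    let c : Fin 4 → ℝ := ![0, 0, 100, 1]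
    let d : ℝ := 2 * s + 1
    IsLeast {v : ℝ | ∃ (x y : Fin 4 → ℝ),
        (∀ i, y i = 0 ∨ y i = 1) ∧ (∑ i, y i) ≤ 2 ∧
        (∀ i, 0 ≤ x i) ∧ (∀ i, x i ≤ cap i * y i) ∧ (∑ i, x i) = d ∧
        v = ∑ i, c i * x i} ((s : ℝ) + 1) ∧
    IsLeast {v : ℝ | ∃ (x y : Fin 4 → ℝ),
        (∀ i, 0 ≤ y i ∧ y i ≤ 1) ∧ (∑ i, y i) ≤ 2 ∧
        (∀ i, 0 ≤ x i) ∧ (∀ i, x i ≤ cap i * y i) ∧ (∑ i, x i) = d ∧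
        v = ∑ i, c i * x i} (100 * M / (M - 1)) ∧
    ((s : ℝ) + 1) / (100 * M / (M - 1)) > ((s : ℝ) + 1) / 200 := by
  intro cap c d
  have hs' : (101 : ℝ) ≤ s := by exact_mod_cast hs
  have hM' : (s : ℝ) + 1 ≤ M := by exact_mod_cast hM
  have hM1 : (0 : ℝ) < M - 1 := by linarith
  have hlp_pos : 0 < 100 * (M : ℝ) / (M - 1) := div_pos (by linarith) hM1
  have hlp_lt : 100 * (M : ℝ) / (M - 1) < 200 := by rw [div_lt_iff₀ hM1]; linarith
  refine ⟨⟨integer_witness (by positivity), ?_⟩, ⟨lp_witness (by positivity) (by nlinarith), ?_⟩,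
    div_lt_div_of_pos_left (by positivity : (0 : ℝ) < s + 1) hlp_pos hlp_lt⟩
  · rintro v ⟨x, y, hy, hyk, hx, hxy, hxd, rfl⟩
    exact le_integer_cost (by linarith) hy hyk hx hxy hxd
  · rintro v ⟨x, y, hy, hyk, hx, hxy, hxd, rfl⟩
    exact le_lp_cost (by positivity) (by linarith) (by nlinarith) hy hyk hx hxy hxd
end

section
/- Let P be the polytope of points (x, y) ∈ ℝ^F × ℝ^F satisfying ∑_i x_i = d, ∑_i y_i = k, 0 ≤ x_i ≤ s_i y_i, and 0 ≤ y_i ≤ 1 for all i ∈ F, where k is an integer. Then at every vertex (x, y) of P, either y is integral, or y has exactly two non-integer components and for every i ∈ F one has x_i = 0 or x_i = s_i y_i. -/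
/-!
At a vertex `(x, y)` every feasible two-sided perturbation vanishes. Perturb `y` along some `v`
supported on the non-integral coordinates (where `0 < y i < 1`) and move `x` proportionally,
`u i = x i / y i * v i`, so that every constraint `0 ≤ x i ≤ s i y i` stays satisfied; in
addition, on the slack coordinates (`0 < x i < s i y i`) `u` may be changed freely. Only the
two equations `∑ u = 0`, `∑ v = 0` have to hold, so the number of non-integral plus slack
coordinates is at most two. Since `∑ y i = k` is an integer, exactly one non-integral
coordinate is impossible; hence if `y` is not integral there are exactly two of them and no
slack coordinate.
-/

open scoped Classical
open Filter Topology Finset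

lemma sum_dite_mem_eq_sum_subtype {ι M : Type*} [Fintype ι] [DecidableEq ι] [AddCommMonoid M]
    (T : Finset ι) (g : ∀ i ∈ T, M) :
    ∑ i, (if h : i ∈ T then g i h else 0) = ∑ i : T, g i i.2 := by
  rw [← sum_subset (subset_univ T) (fun i _ hi => dif_neg hi), ← sum_coe_sort]
  exact sum_congr rfl fun i _ => dif_pos i.2

section Extreme

variable {E : Type*} [AddCommGroup E] [Module ℝ E] {A : Set E} {z w : E}

lemma eq_zero_of_add_mem_of_sub_mem_extremePoints (hz : z ∈ A.extremePoints ℝ)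
    (hadd : z + w ∈ A) (hsub : z - w ∈ A) : w = 0 := by
  simpa using hz.2 hsub hadd (mem_openSegment_sub_add z w)

lemma eq_zero_of_eventually_add_smul_mem_extremePoints (hz : z ∈ A.extremePoints ℝ)
    (h : ∀ᶠ t : ℝ in 𝓝 0, z + t • w ∈ A) : w = 0 := by
  have hneg : ∀ᶠ t : ℝ in 𝓝 0, z + (-t) • w ∈ A :=
    (continuous_neg.tendsto' 0 0 neg_zero).eventually h
  obtain ⟨t, ⟨hadd, hsub⟩, ht⟩ := (((h.and hneg).filter_mono nhdsWithin_le_nhds).and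
    (self_mem_nhdsWithin (s := Set.Ioi 0))).exists
  rw [neg_smul, ← sub_eq_add_neg] at hsub
  have htw : t • w = 0 := eq_zero_of_add_mem_of_sub_mem_extremePoints hz hadd hsub
  exact (smul_eq_zero.mp htw).resolve_left (ne_of_gt ht)

end Extreme

lemma eventually_nonneg_add_mul {c e : ℝ} (h : e = 0 ∧ 0 ≤ c ∨ 0 < c) :
    ∀ᶠ t : ℝ in 𝓝 0, 0 ≤ c + t * e := by
  rcases h with ⟨rfl, hc⟩ | hc
  · exact Eventually.of_forall fun t => by simpa using hc
  · have hlim : Tendsto (fun t : ℝ => c + t * e) (𝓝 0) (𝓝 c) := by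
      simpa using (tendsto_const_nhds (x := c)).add ((tendsto_id (x := 𝓝 (0 : ℝ))).mul_const e)
    exact (hlim.eventually (lt_mem_nhds hc)).mono fun _ => le_of_lt

lemma pos_and_lt_one_of_not_exists_int {r : ℝ} (h0 : 0 ≤ r) (h1 : r ≤ 1)
    (hr : ¬∃ n : ℤ, r = n) : 0 < r ∧ r < 1 :=
  ⟨h0.lt_of_ne fun h => hr ⟨0, by simp [← h]⟩,
    h1.lt_of_ne fun h => hr ⟨1, by simp [h]⟩⟩

section CapacityPolytope

variable {ι : Type*} [Fintype ι]

def capacityPolytope (s : ι → ℝ) (d k : ℝ) : Set ((ι → ℝ) × (ι → ℝ)) :=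
  {p | (∑ i, p.1 i) = d ∧ (∑ i, p.2 i) = k ∧
    (∀ i, 0 ≤ p.1 i ∧ p.1 i ≤ s i * p.2 i) ∧ (∀ i, 0 ≤ p.2 i ∧ p.2 i ≤ 1)}

noncomputable def nonintegralIndices (y : ι → ℝ) : Finset ι :=
  univ.filter fun i => ¬∃ n : ℤ, y i = n

noncomputable def slackIndices (s x y : ι → ℝ) : Finset ι :=
  univ.filter fun i => 0 < x i ∧ x i < s i * y i

lemma card_nonintegralIndices_ne_one {y : ι → ℝ} {k : ℤ} (hk : ∑ i, y i = k) :
    #(nonintegralIndices y) ≠ 1 := by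
  intro hcard
  obtain ⟨i₀, hi₀⟩ := card_eq_one.mp hcard
  have hint : ∀ j ∈ univ.erase i₀, y j = ⌊y j⌋ := by
    intro j hj
    by_contra hne
    have hj' : j ∈ nonintegralIndices y :=
      mem_filter.mpr ⟨mem_univ j, fun ⟨n, hn⟩ => hne (by simp [hn])⟩
    exact (mem_erase.mp hj).1 (by simpa [hi₀] using hj')
  have hi₀' : i₀ ∈ nonintegralIndices y := by simp [hi₀]
  refine (mem_filter.mp hi₀').2 ⟨k - ∑ j ∈ univ.erase i₀, ⌊y j⌋, ?_⟩
  rw [← add_sum_erase univ y (mem_univ i₀), sum_congr rfl hint] at hk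
  push_cast
  linarith

variable {s x y : ι → ℝ} {d k : ℝ}

-- Where `y i = 0` the junk value `x i / 0 = 0` is harmless, since `hv` forces `v i = 0` there.
lemma eventually_add_smul_mem_capacityPolytope (hp : (x, y) ∈ capacityPolytope s d k)
    {u v : ι → ℝ} (hv : ∀ i, v i ≠ 0 → 0 < y i ∧ y i < 1)
    (hu : ∀ i, u i = x i / y i * v i ∨ 0 < x i ∧ x i < s i * y i)
    (hu0 : ∑ i, u i = 0) (hv0 : ∑ i, v i = 0) :
    ∀ᶠ t : ℝ in 𝓝 0, (x, y) + t • (u, v) ∈ capacityPolytope s d k := by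
  simp only [capacityPolytope, Set.mem_ofPred_eq] at hp
  obtain ⟨hx, hy, hxy, hy01⟩ := hp
  have hx_nonneg : ∀ i, ∀ᶠ t : ℝ in 𝓝 0, 0 ≤ x i + t * u i := by
    intro i
    refine eventually_nonneg_add_mul ?_
    rcases hu i with hui | hslack
    · rcases (hxy i).1.eq_or_lt with hx0 | hx0
      · exact Or.inl ⟨by simp [hui, ← hx0], (hxy i).1⟩
      · exact Or.inr hx0
    · exact Or.inr hslack.1
  have hx_le : ∀ i, ∀ᶠ t : ℝ in 𝓝 0, x i + t * u i ≤ s i * (y i + t * v i) := by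
    intro i
    refine (eventually_nonneg_add_mul (c := s i * y i - x i) (e := s i * v i - u i) ?_).mono
      fun t ht => by linarith
    rcases hu i with hui | hslack
    · rcases (hxy i).2.eq_or_lt with hxs | hxs
      · refine Or.inl ⟨?_, by linarith⟩
        by_cases hvi : v i = 0
        · simp [hui, hvi]
        · rw [hui, hxs, mul_div_cancel_right₀ _ (hv i hvi).1.ne', sub_self]
      · exact Or.inr (by linarith)
    · exact Or.inr (by linarith [hslack.2])
  have hy_bounds :
      ∀ i, ∀ᶠ t : ℝ in 𝓝 0, 0 ≤ y i + t * v i ∧ y i + t * v i ≤ 1 := by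
    intro i
    by_cases hvi : v i = 0
    · exact Eventually.of_forall fun t => by simpa [hvi] using hy01 i
    · have hlo := eventually_nonneg_add_mul (e := v i) (Or.inr (hv i hvi).1)
      have hhi := eventually_nonneg_add_mul (e := -v i) (Or.inr (sub_pos.mpr (hv i hvi).2))
      filter_upwards [hlo, hhi] with t hlo hhi
      exact ⟨hlo, by linarith⟩
  filter_upwards [eventually_all.mpr hx_nonneg, eventually_all.mpr hx_le,
    eventually_all.mpr hy_bounds] with t hx_nonneg hx_le hy_bounds
  refine ⟨?_, ?_, fun i => ⟨hx_nonneg i, hx_le i⟩, hy_bounds⟩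
  · simp [sum_add_distrib, ← mul_sum, hx, hu0]
  · simp [sum_add_distrib, ← mul_sum, hy, hv0]

lemma eq_zero_of_mem_extremePoints_capacityPolytope
    (hz : (x, y) ∈ (capacityPolytope s d k).extremePoints ℝ)
    {u v : ι → ℝ} (hv : ∀ i, v i ≠ 0 → 0 < y i ∧ y i < 1)
    (hu : ∀ i, u i = x i / y i * v i ∨ 0 < x i ∧ x i < s i * y i)
    (hu0 : ∑ i, u i = 0) (hv0 : ∑ i, v i = 0) : u = 0 ∧ v = 0 :=
  Prod.mk_eq_zero.mp <| eq_zero_of_eventually_add_smul_mem_extremePoints hz <|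
    eventually_add_smul_mem_capacityPolytope hz.1 hv hu hu0 hv0

lemma card_nonintegralIndices_add_card_slackIndices_le_two
    (hz : (x, y) ∈ (capacityPolytope s d k).extremePoints ℝ) :
    #(nonintegralIndices y) + #(slackIndices s x y) ≤ 2 := by
  set T := nonintegralIndices y
  set L := slackIndices s x y
  by_contra! hcard
  -- A nontrivial relation among these more than two vectors of `ℝ × ℝ` is a nonzero direction
  -- `(u, v)`: the `T`-coefficients give `v`, the `L`-coefficients the free part of `u`.
  let g : T ⊕ L → ℝ × ℝ := Sum.elim (fun i => (1, x i / y i)) fun _ => (0, 1)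
  have hdep : ¬LinearIndependent ℝ g := fun hli => by
    have := hli.fintype_card_le_finrank
    simp only [Fintype.card_sum, Fintype.card_coe, Module.finrank_prod,
      Module.finrank_self] at this
    omega
  obtain ⟨f, hf, j, hj⟩ := Fintype.not_linearIndependent_iff.mp hdep
  let v : ι → ℝ := fun i => if h : i ∈ T then f (.inl ⟨i, h⟩) else 0
  let w : ι → ℝ := fun i => if h : i ∈ L then f (.inr ⟨i, h⟩) else 0
  have hf₁ : ∑ i, v i = 0 := by
    simp only [v, sum_dite_mem_eq_sum_subtype]
    simpa [g, Fintype.sum_sum_type, Prod.fst_sum] using congrArg Prod.fst hf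
  have hf₂ : ∑ i, (x i / y i * v i + w i) = 0 := by
    simp only [v, w, sum_add_distrib, mul_dite, mul_zero, sum_dite_mem_eq_sum_subtype]
    simpa [g, Fintype.sum_sum_type, Prod.snd_sum, mul_comm] using congrArg Prod.snd hf
  have hv : ∀ i, v i ≠ 0 → 0 < y i ∧ y i < 1 := by
    intro i hvi
    have hiT : i ∈ T := by by_contra hiT; exact hvi (dif_neg hiT)
    have hy01 := hz.1.2.2.2 i
    exact pos_and_lt_one_of_not_exists_int hy01.1 hy01.2 (mem_filter.mp hiT).2
  have hu : ∀ i, x i / y i * v i + w i = x i / y i * v i ∨ 0 < x i ∧ x i < s i * y i := by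
    intro i
    by_cases hiL : i ∈ L
    · exact Or.inr (mem_filter.mp hiL).2
    · exact Or.inl (by simp [w, hiL])
  obtain ⟨hu0, hv0⟩ := eq_zero_of_mem_extremePoints_capacityPolytope hz hv hu hf₂ hf₁
  rcases j with ⟨i, hi⟩ | ⟨i, hi⟩
  · exact hj (by simpa [v, hi] using congrFun hv0 i)
  · exact hj (by simpa [v, w, hi, congrFun hv0 i] using congrFun hu0 i)

lemma eq_zero_or_eq_mul_of_slackIndices_eq_empty (hxy : ∀ i, 0 ≤ x i ∧ x i ≤ s i * y i)
    (h : slackIndices s x y = ∅) (i : ι) : x i = 0 ∨ x i = s i * y i := by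
  have hi : i ∉ slackIndices s x y := h ▸ notMem_empty i
  simp only [slackIndices, mem_filter, mem_univ, true_and, not_and_or, not_lt] at hi
  rcases hi with hi | hi
  · exact Or.inl (le_antisymm hi (hxy i).1)
  · exact Or.inr (le_antisymm (hxy i).2 hi)

end CapacityPolytope

theorem stmt_4_general {ι : Type*} [Fintype ι] (s : ι → ℝ) (d : ℝ) (k : ℤ)
    (P : Set ((ι → ℝ) × (ι → ℝ)))
    (hP : P = {p | (∑ i, p.1 i) = d ∧ (∑ i, p.2 i) = (k : ℝ) ∧
      (∀ i, 0 ≤ p.1 i ∧ p.1 i ≤ s i * p.2 i) ∧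
      (∀ i, 0 ≤ p.2 i ∧ p.2 i ≤ 1)})
    (x y : ι → ℝ) (hvx : (x, y) ∈ P.extremePoints ℝ) :
    (∀ i, ∃ n : ℤ, y i = n) ∨
      ((Finset.univ.filter fun i => ¬∃ n : ℤ, y i = n).card = 2 ∧
        ∀ i, x i = 0 ∨ x i = s i * y i) := by
  subst hP
  change (x, y) ∈ (capacityPolytope s d k).extremePoints ℝ at hvx
  by_cases hint : ∀ i, ∃ n : ℤ, y i = n
  · exact Or.inl hint
  right
  obtain ⟨i₀, hi₀⟩ := not_forall.mp hint
  have hpos : 0 < #(nonintegralIndices y) :=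
    card_pos.mpr ⟨i₀, mem_filter.mpr ⟨mem_univ _, hi₀⟩⟩
  have hle := card_nonintegralIndices_add_card_slackIndices_le_two hvx
  have hne : #(nonintegralIndices y) ≠ 1 := card_nonintegralIndices_ne_one hvx.1.2.1
  have hslack : slackIndices s x y = ∅ := card_eq_zero.mp (by omega)
  exact ⟨show #(nonintegralIndices y) = 2 by omega,
    eq_zero_or_eq_mul_of_slackIndices_eq_empty hvx.1.2.2.1 hslack⟩

/-- Structure of vertices of the single-sink LP polytope: at any extreme point,
either y is integral, or y has exactly two non-integer components and every
x_i is 0 or s_i y_i. -/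
theorem stmt_4 {ι : Type*} [Fintype ι] (s : ι → ℝ) (d : ℝ) (k : ℤ)
    (hs : ∀ i, 0 ≤ s i) (hd : 0 ≤ d)
    (P : Set ((ι → ℝ) × (ι → ℝ)))
    (hP : P = {p | (∑ i, p.1 i) = d ∧ (∑ i, p.2 i) = (k : ℝ) ∧
      (∀ i, 0 ≤ p.1 i ∧ p.1 i ≤ s i * p.2 i) ∧
      (∀ i, 0 ≤ p.2 i ∧ p.2 i ≤ 1)})
    (x y : ι → ℝ) (hvx : (x, y) ∈ P.extremePoints ℝ) :
    (∀ i, ∃ n : ℤ, y i = n) ∨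
      ((Finset.univ.filter fun i => ¬∃ n : ℤ, y i = n).card = 2 ∧
        ∀ i, x i = 0 ∨ x i = s i * y i) :=
  stmt_4_general s d k P hP x y hvx
end

section
/- Let Q be the polytope of points (x, y) with x ∈ ℝ^{F×D}_{≥0} and y ∈ ℝ^F satisfying ∑_{i∈F} x_{ij} = d_j for all j ∈ D, ∑_{j∈D} x_{ij} ≤ s_i y_i for all i ∈ F, ∑_{i∈F} y_i ≤ k, and 0 ≤ y_i ≤ 1. Then at every vertex (x, y) of Q, the vector y has at most |D| + 1 non-integer components. -/
/-!
Suppose more than `|D| + 1` facilities are fractional at a vertex `(x, y)`. The vectors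
`(x_i, y_i) ∈ ℝ^D × ℝ` of these facilities are then linearly dependent, say `∑ c_i (x_i, y_i) = 0`.
Rescaling row `i` of `(x, y)` by `1 ± t c_i` keeps every demand and the budget unchanged, and
for small `t > 0` it also keeps every capacity and box constraint (the fractional `y_i` have slack
`1 - y_i`). So `(x, y)` is the midpoint of two distinct points of `Q`, which is impossible.
-/

open Finset Filter Module Topology

theorem eq_zero_of_add_mem_of_sub_mem_of_mem_extremePoints {𝕜 E : Type*} [Field 𝕜] [LinearOrder 𝕜]
    [IsStrictOrderedRing 𝕜] [AddCommGroup E] [Module 𝕜 E] {A : Set E} {p v : E}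
    (hp : p ∈ A.extremePoints 𝕜) (hadd : p + v ∈ A) (hsub : p - v ∈ A) : v = 0 :=
  add_eq_left.mp (hp.2 hadd hsub (mem_openSegment_add_sub p v))

theorem exists_sum_smul_eq_zero_of_finrank_lt_card {K V ι : Type*} [Field K] [AddCommGroup V]
    [Module K V] [FiniteDimensional K V] [Fintype ι] [DecidableEq ι] (v : ι → V) {T : Finset ι}
    (hT : finrank K V < #T) :
    ∃ c : ι → K, ∑ i, c i • v i = 0 ∧ (∀ i, c i ≠ 0 → i ∈ T) ∧ ∃ i, c i ≠ 0 := by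
  have hdep : ¬LinearIndepOn K v (T : Set ι) := fun h ↦ by
    have := h.fintype_card_le_finrank
    simp only [coe_sort_coe, Fintype.card_coe] at this
    omega
  obtain ⟨f, hf, i, hiT, hi⟩ := not_linearIndepOn_finset_iff.mp hdep
  refine ⟨fun i ↦ if i ∈ T then f i else 0, ?_, fun j hj ↦ ?_, i, by simpa [hiT]⟩
  · simpa [ite_smul, sum_ite_mem] using hf
  · by_contra hjT
    simp [hjT] at hj

theorem exists_pos_mul_abs_le {ι : Type*} [Finite ι] {a b : ι → ℝ} (hb : ∀ i, 0 ≤ b i)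
    (hab : ∀ i, b i = 0 → a i = 0) : ∃ t > 0, ∀ i, t * |a i| ≤ b i := by
  have hsmall : ∀ i, ∀ᶠ t in 𝓝 (0 : ℝ), t * |a i| ≤ b i := fun i ↦ by
    rcases (hb i).eq_or_lt with h | h
    · simp [hab i h.symm, ← h]
    · have : Tendsto (fun t : ℝ ↦ t * |a i|) (𝓝 0) (𝓝 0) := by
        simpa using (continuous_id.mul continuous_const).tendsto (0 : ℝ) (f := fun t ↦ t * |a i|)
      exact (this.eventually (eventually_lt_nhds h)).mono fun _ ↦ le_of_lt
  obtain ⟨t, ht, hpos⟩ :=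
    ((eventually_all.mpr hsmall).filter_mono nhdsWithin_le_nhds).and self_mem_nhdsWithin
      |>.exists (f := 𝓝[>] (0 : ℝ))
  exact ⟨t, hpos, ht⟩

section CapacitatedFacilityLocation

variable {ι κ : Type*}

def capacitatedFacilityPolytope [Fintype ι] [Fintype κ] (s : ι → ℝ) (d : κ → ℝ) (k : ℕ) :
    Set ((ι → κ → ℝ) × (ι → ℝ)) :=
  {p | (∀ i j, 0 ≤ p.1 i j) ∧
      (∀ j, (∑ i, p.1 i j) = d j) ∧
      (∀ i, (∑ j, p.1 i j) ≤ s i * p.2 i) ∧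
      (∑ i, p.2 i) ≤ (k : ℝ) ∧
      (∀ i, 0 ≤ p.2 i ∧ p.2 i ≤ 1)}

def scaleFacilities (c : ι → ℝ) (x : ι → κ → ℝ) (y : ι → ℝ) : (ι → κ → ℝ) × (ι → ℝ) :=
  (fun i j ↦ c i * x i j, fun i ↦ c i * y i)

theorem scaleFacilities_smul (r : ℝ) (c : ι → ℝ) (x : ι → κ → ℝ) (y : ι → ℝ) :
    scaleFacilities (r • c) x y = r • scaleFacilities c x y := by
  ext <;> simp [scaleFacilities, mul_assoc]

theorem add_scaleFacilities_mem_capacitatedFacilityPolytope [Fintype ι] [Fintype κ]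
    {s : ι → ℝ} {d : κ → ℝ} {k : ℕ} {x : ι → κ → ℝ} {y : ι → ℝ} {c : ι → ℝ} 
    (hp : (x, y) ∈ capacitatedFacilityPolytope s d k) (hcx : ∀ j, ∑ i, c i * x i j = 0)
    (hcy : ∑ i, c i * y i = 0) (hc : ∀ i, |c i| ≤ 1 - y i) :
    (x, y) + scaleFacilities c x y ∈ capacitatedFacilityPolytope s d k := by
  obtain ⟨hx0, hdem, hcap, hbud, hy01⟩ := hp
  have hrow : (x, y) + scaleFacilities c x y =
      (fun i j ↦ (1 + c i) * x i j, fun i ↦ (1 + c i) * y i) := by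
    ext <;> simp [scaleFacilities] <;> ring
  have hcoef : ∀ i, y i ≤ 1 + c i := fun i ↦ by linarith [neg_abs_le (c i), hc i]
  have hcoef0 : ∀ i, 0 ≤ 1 + c i := fun i ↦ (hy01 i).1.trans (hcoef i)
  rw [hrow]
  refine ⟨fun i j ↦ mul_nonneg (hcoef0 i) (hx0 i j), fun j ↦ ?_, fun i ↦ ?_, ?_,
    fun i ↦ ⟨mul_nonneg (hcoef0 i) (hy01 i).1, ?_⟩⟩
  · simp only [add_mul, one_mul, sum_add_distrib, hdem, hcx, add_zero]
  · calc ∑ j, (1 + c i) * x i j = (1 + c i) * ∑ j, x i j := (mul_sum ..).symm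
      _ ≤ (1 + c i) * (s i * y i) := mul_le_mul_of_nonneg_left (hcap i) (hcoef0 i)
      _ = s i * ((1 + c i) * y i) := by ring
  · simpa only [add_mul, one_mul, sum_add_distrib, hcy, add_zero] using hbud
  · -- `(1 + c_i) y_i ≤ (2 - y_i) y_i = 1 - (1 - y_i)²`
    have hc' : c i ≤ 1 - y i := (le_abs_self _).trans (hc i)
    nlinarith [(hy01 i).1, sq_nonneg (1 - y i)]

theorem scaleFacilities_eq_zero_of_mem_extremePoints [Fintype ι] [Fintype κ]
    {s : ι → ℝ} {d : κ → ℝ} {k : ℕ} {x : ι → κ → ℝ} {y : ι → ℝ} {c : ι → ℝ}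
    (hv : (x, y) ∈ (capacitatedFacilityPolytope s d k).extremePoints ℝ)
    (hcx : ∀ j, ∑ i, c i * x i j = 0) (hcy : ∑ i, c i * y i = 0)
    (hc : ∀ i, c i ≠ 0 → y i ≠ 1) :
    scaleFacilities c x y = 0 := by
  have hy1 : ∀ i, y i ≤ 1 := fun i ↦ (hv.1.2.2.2.2 i).2
  obtain ⟨t, ht, htc⟩ := exists_pos_mul_abs_le (a := c) (b := fun i ↦ 1 - y i)
    (fun i ↦ sub_nonneg.mpr (hy1 i)) fun i hi ↦ by_contra fun h ↦ hc i h (by linarith)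
  have hmem : ∀ r : ℝ, |r| = t →
      (x, y) + r • scaleFacilities c x y ∈ capacitatedFacilityPolytope s d k := fun r hr ↦ by
    rw [← scaleFacilities_smul]
    exact add_scaleFacilities_mem_capacitatedFacilityPolytope hv.1
      (fun j ↦ by simp [mul_assoc, ← mul_sum, hcx j]) (by simp [mul_assoc, ← mul_sum, hcy])
      (fun i ↦ by simpa [abs_mul, hr] using htc i)
  have hzero : t • scaleFacilities c x y = 0 :=
    eq_zero_of_add_mem_of_sub_mem_of_mem_extremePoints hv (hmem t (abs_of_pos ht))
      (by simpa [sub_eq_add_neg] using hmem (-t) (by simp [ht.le]))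
  exact (smul_eq_zero.mp hzero).resolve_left ht.ne'

end CapacitatedFacilityLocation

open scoped Classical

theorem stmt_5_general {ι κ : Type*} [Fintype ι] [Fintype κ]
    (s : ι → ℝ) (d : κ → ℝ) (k : ℕ)
    (Q : Set ((ι → κ → ℝ) × (ι → ℝ)))
    (hQ : Q = {p | (∀ i j, 0 ≤ p.1 i j) ∧
      (∀ j, (∑ i, p.1 i j) = d j) ∧
      (∀ i, (∑ j, p.1 i j) ≤ s i * p.2 i) ∧
      (∑ i, p.2 i) ≤ (k : ℝ) ∧
      (∀ i, 0 ≤ p.2 i ∧ p.2 i ≤ 1)})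
    (x : ι → κ → ℝ) (y : ι → ℝ) (hvx : (x, y) ∈ Q.extremePoints ℝ) :
    (Finset.univ.filter fun i => ¬∃ n : ℤ, y i = n).card ≤ Fintype.card κ + 1 := by
  have hv : (x, y) ∈ (capacitatedFacilityPolytope s d k).extremePoints ℝ := by
    rwa [hQ] at hvx
  set T := univ.filter fun i => ¬∃ n : ℤ, y i = n
  have hfrac : ∀ i ∈ T, y i ≠ 0 ∧ y i ≠ 1 := fun i hi ↦ by
    simp only [T, mem_filter, mem_univ, true_and, not_exists] at hi
    exact ⟨by simpa using hi 0, by simpa using hi 1⟩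
  by_contra! hT
  obtain ⟨c, hc, hcT, i₀, hi₀⟩ := exists_sum_smul_eq_zero_of_finrank_lt_card (K := ℝ)
    (fun i ↦ (x i, y i)) (T := T) (by simpa [finrank_prod, finrank_fintype_fun_eq_card] using hT)
  have hcx : ∀ j, ∑ i, c i * x i j = 0 := fun j ↦ by
    simpa [Prod.fst_sum, Finset.sum_apply] using congrFun (congrArg Prod.fst hc) j
  have hcy : ∑ i, c i * y i = 0 := by simpa [Prod.snd_sum] using congrArg Prod.snd hc
  have hzero := congrFun (congrArg Prod.snd <| scaleFacilities_eq_zero_of_mem_extremePoints hv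
    hcx hcy fun i hi ↦ (hfrac i (hcT i hi)).2) i₀
  simp [scaleFacilities, hi₀, (hfrac i₀ (hcT i₀ hi₀)).1] at hzero

/-- Structure of vertices of the CKFL LP polytope Q: at any extreme point,
y has at most |D| + 1 non-integer components. -/
theorem stmt_5 {ι κ : Type*} [Fintype ι] [Fintype κ]
    (s : ι → ℝ) (d : κ → ℝ) (k : ℕ)
    (hs : ∀ i, 0 ≤ s i) (hd : ∀ j, 0 ≤ d j) (hk : 0 < k)
    (Q : Set ((ι → κ → ℝ) × (ι → ℝ)))
    (hQ : Q = {p | (∀ i j, 0 ≤ p.1 i j) ∧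
      (∀ j, (∑ i, p.1 i j) = d j) ∧
      (∀ i, (∑ j, p.1 i j) ≤ s i * p.2 i) ∧
      (∑ i, p.2 i) ≤ (k : ℝ) ∧
      (∀ i, 0 ≤ p.2 i ∧ p.2 i ≤ 1)})
    (x : ι → κ → ℝ) (y : ι → ℝ) (hvx : (x, y) ∈ Q.extremePoints ℝ) :
    (Finset.univ.filter fun i => ¬∃ n : ℤ, y i = n).card ≤ Fintype.card κ + 1 :=
  stmt_5_general s d k Q hQ x y hvx
end

section
/- Let (x, y) be a vertex of the convex hull of feasible solutions to the uniform-capacity capacitated k-facility location MIP, and let G be the bipartite graph on open facilities and clients whose edges are the pairs {i, j} with x_{ij} > 0. Then G is acyclic. -/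
/-!
If the support graph of `x` contained a cycle, the signed traversal count `z` of the cycle's
darts would be a nonzero circulation supported on `{x > 0}`: all its row and column sums
vanish, since a closed walk leaves every vertex as often as it enters it. Moving `x` by `±ε z`
for small `ε > 0` keeps every constraint (the `y`-part does not move), so `(x, y)` would be the
midpoint of two distinct feasible points.
-/

open Finset SimpleGraph Sum

theorem eq_zero_of_add_mem_of_sub_mem_extremePoints_s7 {𝕜 E : Type*} [Ring 𝕜]
    [LinearOrder 𝕜] [IsStrictOrderedRing 𝕜] [Invertible (2 : 𝕜)] [AddCommGroup E] [Module 𝕜 E]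
    {A : Set E} {x y : E} (hx : x ∈ A.extremePoints 𝕜) (h₁ : x + y ∈ A) (h₂ : x - y ∈ A) :
    y = 0 :=
  add_eq_left.mp (hx.2 h₁ h₂ (mem_openSegment_add_sub x y))

theorem exists_pos_forall_mul_abs_le {α : Type*} [Finite α] {x z : α → ℝ} (hx : 0 ≤ x)
    (hxz : ∀ a, z a ≠ 0 → 0 < x a) : ∃ ε > 0, ∀ a, ε * |z a| ≤ x a := by
  have h : ∀ᶠ ε in nhdsWithin (0 : ℝ) (Set.Ioi 0), 0 < ε ∧ ∀ a, ε * |z a| ≤ x a := by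
    refine eventually_mem_nhdsWithin.and (Filter.eventually_all.2 fun a => ?_)
    by_cases hza : z a = 0
    · exact .of_forall fun ε => by simpa [hza] using hx a
    · have hlim : Filter.Tendsto (fun ε : ℝ => ε * |z a|) (nhds 0) (nhds 0) := by
        simpa using (Filter.tendsto_id (x := nhds (0 : ℝ))).mul_const |z a|
      exact nhdsWithin_le_nhds ((hlim.eventually (gt_mem_nhds (hxz a hza))).mono
        fun _ => le_of_lt)
  exact h.exists

namespace SimpleGraph.Walk

variable {V : Type*} [DecidableEq V] {G : SimpleGraph V}

def flow {u v : V} (p : G.Walk u v) (a b : V) : ℤ :=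
  (p.darts.map Dart.toProd).count (a, b) - (p.darts.map Dart.toProd).count (b, a)

theorem flow_swap {u v : V} (p : G.Walk u v) (a b : V) : p.flow b a = -p.flow a b := by
  simp only [flow]; ring

theorem flow_eq_zero_of_not_adj {u v a b : V} (p : G.Walk u v) (h : ¬G.Adj a b) :
    p.flow a b = 0 := by
  have hdart : ∀ a b, ¬G.Adj a b → (p.darts.map Dart.toProd).count (a, b) = 0 := by
    intro a b h
    simp only [List.count_eq_zero, List.mem_map, not_exists, not_and]
    rintro ⟨_, hadj⟩ - rfl
    exact h hadj
  simp [flow, hdart a b h, hdart b a fun h' => h h'.symm]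

theorem sum_flow [Fintype V] {u v : V} (p : G.Walk u v) (a : V) :
    ∑ b, p.flow a b = (if a = u then 1 else 0) - (if a = v then 1 else 0) := by
  induction p with
  | nil => simp [flow]
  | @cons u w v h q ih =>
    have hstep : ∀ b, (cons h q).flow a b =
        q.flow a b + ((if u = a ∧ w = b then 1 else 0) - (if u = b ∧ w = a then 1 else 0)) := by
      intro b
      simp only [flow, darts_cons, List.map_cons, List.count_cons, beq_iff_eq, Prod.mk.injEq]
      push_cast
      ring
    simp only [hstep, sum_add_distrib, sum_sub_distrib, ih]
    simp only [ite_and, sum_ite_irrel, sum_ite_eq, sum_const_zero, mem_univ, if_true]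
    simp only [eq_comm (a := u), eq_comm (a := w)]
    ring

theorem flow_eq_one_of_mem_darts {u v : V} {p : G.Walk u v} (hp : p.IsTrail) {d : G.Dart}
    (hd : d ∈ p.darts) : p.flow d.fst d.snd = 1 := by
  have hedges : (p.darts.map Dart.edge).Nodup := p.edges_eq_map_darts ▸ hp.edges_nodup
  have hnodup : (p.darts.map Dart.toProd).Nodup :=
    (hedges.of_map _).map fun _ _ => Dart.ext _ _
  have hrev : (d.snd, d.fst) ∉ p.darts.map Dart.toProd := by
    intro h
    obtain ⟨d', hd', hd'd⟩ := List.mem_map.1 h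
    have : d' = d := List.inj_on_of_nodup_map hedges hd' hd (by
      rw [Dart.edge, Dart.edge, hd'd]; exact Sym2.eq_swap)
    subst this
    exact d'.adj.ne (congrArg Prod.fst hd'd)
  rw [flow, List.count_eq_one_of_mem hnodup (List.mem_map_of_mem hd), List.count_eq_zero.2 hrev]
  rfl

end SimpleGraph.Walk

namespace CKFL

variable {ι κ : Type*}

def feasibleSet [Fintype ι] [Fintype κ] (s : ℝ) (d : κ → ℝ) (k : ℕ) :
    Set ((ι → κ → ℝ) × (ι → ℝ)) :=
  {p | (∀ i, p.2 i = 0 ∨ p.2 i = 1) ∧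
      (∑ i, p.2 i) ≤ (k : ℝ) ∧
      (∀ i j, 0 ≤ p.1 i j) ∧
      (∀ j, (∑ i, p.1 i j) = d j) ∧
      (∀ i, (∑ j, p.1 i j) ≤ s * p.2 i)}

theorem add_smul_mem_feasibleSet [Fintype ι] [Fintype κ] {s : ℝ} {d : κ → ℝ} {k : ℕ}
    {x z : ι → κ → ℝ} {y : ι → ℝ} {ε t : ℝ} (hp : (x, y) ∈ feasibleSet s d k)
    (hrow : ∀ i, ∑ j, z i j = 0) (hcol : ∀ j, ∑ i, z i j = 0)
    (hz : ∀ i j, ε * |z i j| ≤ x i j) (ht : |t| ≤ ε) :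
    (x + t • z, y) ∈ feasibleSet s d k := by
  obtain ⟨hy, hk, -, hdemand, hcap⟩ := hp
  refine ⟨hy, hk, fun i j => ?_, fun j => ?_, fun i => ?_⟩
  · have : |t * z i j| ≤ x i j := by
      rw [abs_mul]
      exact (mul_le_mul_of_nonneg_right ht (abs_nonneg _)).trans (hz i j)
    simpa [neg_le_iff_add_nonneg'] using (abs_le.1 this).1
  · simpa [sum_add_distrib, ← mul_sum, hcol] using hdemand j
  · simpa [sum_add_distrib, ← mul_sum, hrow] using hcap i

def supportGraph (x : ι → κ → ℝ) : SimpleGraph (ι ⊕ κ) :=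
  SimpleGraph.fromRel fun a b => ∃ i j, a = inl i ∧ b = inr j ∧ 0 < x i j

section supportGraph

variable {x : ι → κ → ℝ}

@[simp]
theorem supportGraph_adj_inl_inr {i : ι} {j : κ} :
    (supportGraph x).Adj (inl i) (inr j) ↔ 0 < x i j := by
  simp [supportGraph]

@[simp]
theorem supportGraph_not_adj_inl_inl {i i' : ι} : ¬(supportGraph x).Adj (inl i) (inl i') := by
  simp [supportGraph]

@[simp]
theorem supportGraph_not_adj_inr_inr {j j' : κ} : ¬(supportGraph x).Adj (inr j) (inr j') := by
  simp [supportGraph]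

variable [DecidableEq ι] [DecidableEq κ] {v : ι ⊕ κ} (c : (supportGraph x).Walk v v)

theorem row_sum_flow_eq_zero [Fintype ι] [Fintype κ] (i : ι) :
    ∑ j, c.flow (inl i) (inr j) = 0 := by
  simpa [Fintype.sum_sum_type, Walk.flow_eq_zero_of_not_adj] using c.sum_flow (inl i)

theorem col_sum_flow_eq_zero [Fintype ι] [Fintype κ] (j : κ) :
    ∑ i, c.flow (inl i) (inr j) = 0 := by
  simpa [Fintype.sum_sum_type, Walk.flow_eq_zero_of_not_adj, c.flow_swap (inr j)] using
    c.sum_flow (inr j)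

theorem exists_flow_inl_inr_ne_zero (hc : c.IsTrail) (hne : ¬c.Nil) :
    ∃ i j, c.flow (inl i) (inr j) ≠ 0 := by
  obtain ⟨⟨⟨a, b⟩, hab⟩, hd⟩ := List.exists_mem_of_ne_nil _ (Walk.darts_eq_nil.not.2 hne)
  have h1 := Walk.flow_eq_one_of_mem_darts hc hd
  rcases a with i | j <;> rcases b with i' | j'
  · simp at hab
  · exact ⟨i, j', by simp [h1]⟩
  · exact ⟨i', j, by simp [c.flow_swap (inr j), h1]⟩
  · simp at hab

end supportGraph

end CKFL

open CKFL

theorem stmt_7_general {ι κ : Type*} [Fintype ι] [Fintype κ]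
    (s : ℝ) (d : κ → ℝ) (k : ℕ)
    (S : Set ((ι → κ → ℝ) × (ι → ℝ)))
    (hS : S = {p | (∀ i, p.2 i = 0 ∨ p.2 i = 1) ∧
      (∑ i, p.2 i) ≤ (k : ℝ) ∧
      (∀ i j, 0 ≤ p.1 i j) ∧
      (∀ j, (∑ i, p.1 i j) = d j) ∧
      (∀ i, (∑ j, p.1 i j) ≤ s * p.2 i)})
    (x : ι → κ → ℝ) (y : ι → ℝ)
    (hvx : (x, y) ∈ (convexHull ℝ S).extremePoints ℝ) :
    (SimpleGraph.fromRel fun a b : ι ⊕ κ =>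
      ∃ i j, a = Sum.inl i ∧ b = Sum.inr j ∧ 0 < x i j).IsAcyclic := by
  classical
  change S = feasibleSet s d k at hS
  subst hS
  change (supportGraph x).IsAcyclic
  intro v c hc
  set z : ι → κ → ℝ := fun i j => c.flow (inl i) (inr j)
  have hp : (x, y) ∈ feasibleSet s d k := extremePoints_convexHull_subset hvx
  have hx : ∀ i j, 0 ≤ x i j := hp.2.2.1
  have hsupp : ∀ i j, z i j ≠ 0 → 0 < x i j := fun i j h =>
    supportGraph_adj_inl_inr.1 <| not_imp_comm.1 c.flow_eq_zero_of_not_adj (by simpa [z] using h)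
  obtain ⟨ε, hε, hεz⟩ := exists_pos_forall_mul_abs_le (x := fun q : ι × κ => x q.1 q.2)
    (z := fun q => z q.1 q.2) (fun q => hx q.1 q.2) fun q => hsupp q.1 q.2
  have hmem : ∀ t, |t| ≤ ε → (x + t • z, y) ∈ convexHull ℝ (feasibleSet s d k) :=
    fun t ht => subset_convexHull ℝ _ <| add_smul_mem_feasibleSet hp
      (fun i => by simp only [z]; exact_mod_cast row_sum_flow_eq_zero c i)
      (fun j => by simp only [z]; exact_mod_cast col_sum_flow_eq_zero c j)
      (fun i j => hεz (i, j)) ht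
  have hεz0 : ((ε • z, 0) : (ι → κ → ℝ) × (ι → ℝ)) = 0 :=
    eq_zero_of_add_mem_of_sub_mem_extremePoints_s7 hvx
      (by simpa using hmem ε (abs_of_pos hε).le)
      (by simpa [sub_eq_add_neg] using hmem (-ε) (by simp [abs_of_pos hε]))
  obtain ⟨i, j, hij⟩ := exists_flow_inl_inr_ne_zero c hc.isCircuit.isTrail hc.not_nil
  exact hij (by simpa [hε.ne', z] using congrFun (congrFun (congrArg Prod.fst hεz0) i) j)

/-- At a vertex of the convex hull of feasible solutions of the
uniform-capacity CKFL MIP, the bipartite support graph G is acyclic. -/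
theorem stmt_7 {ι κ : Type*} [Fintype ι] [Fintype κ]
    (s : ℝ) (hs : 0 < s) (d : κ → ℝ) (k : ℕ)
    (S : Set ((ι → κ → ℝ) × (ι → ℝ)))
    (hS : S = {p | (∀ i, p.2 i = 0 ∨ p.2 i = 1) ∧
      (∑ i, p.2 i) ≤ (k : ℝ) ∧
      (∀ i j, 0 ≤ p.1 i j) ∧
      (∀ j, (∑ i, p.1 i j) = d j) ∧
      (∀ i, (∑ j, p.1 i j) ≤ s * p.2 i)})
    (x : ι → κ → ℝ) (y : ι → ℝ)
    (hvx : (x, y) ∈ (convexHull ℝ S).extremePoints ℝ) :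
    (SimpleGraph.fromRel fun a b : ι ⊕ κ =>
      ∃ i j, a = Sum.inl i ∧ b = Sum.inr j ∧ 0 < x i j).IsAcyclic :=
  stmt_7_general s d k S hS x y hvx
end

section
/- Let T be a tree that is bipartite with parts F' (facilities) ∪ D' (clients), let s > 0, let d_j > 0 be demands for j ∈ D', and suppose x assigns to each edge {i,j} of T a weight with 0 < x_{ij} < s, such that ∑_{j: {i,j}∈T} x_{ij} = s for every facility i ∈ F' except possibly one designated root facility i*, and for each client j, d_j − ∑_{i: {i,j}∈T} x_{ij} is a nonnegative integer multiple of s. Then the edge weights x are uniquely determined by T, s, d, and i*. -/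
/-!
Fix an edge `e = {i₀, j₀}` of the tree. Removing it splits the tree in two; let `C` be the side
not containing `i*`. Summing the loads of the facilities in `C` and subtracting the loads of the
clients in `C`, every edge inside `C` cancels and only `e` survives, with sign `±1`. The facilities
in `C` all have load `s` and each client load is `d j` minus a multiple of `s`, so `±x e` is
congruent modulo `s` to `-∑_{j ∈ C} d j`, which does not depend on `x`. Two weights in `(0, s)`
that are congruent modulo `s` are equal.
-/

open scoped Classical

open Finset Sum AddCommGroup

theorem SimpleGraph.IsBridge.exists_separating_set {V : Type*} {G : SimpleGraph V} {u v : V}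
    (h : G.IsBridge s(u, v)) (w : V) :
    ∃ C : Set V, w ∉ C ∧ (u ∈ C ↔ v ∉ C) ∧
      ∀ a b, G.Adj a b → s(a, b) ≠ s(u, v) → (a ∈ C ↔ b ∈ C) := by
  set H := G.deleteEdges {s(u, v)}
  have hclosed : ∀ r a b, G.Adj a b → s(a, b) ≠ s(u, v) →
      (H.Reachable r a ↔ H.Reachable r b) := fun r a b hab hne =>
    have hH : H.Adj a b := deleteEdges_adj.mpr ⟨hab, hne⟩
    ⟨fun hr => hr.trans hH.reachable, fun hr => hr.trans hH.symm.reachable⟩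
  by_cases hwu : H.Reachable w u
  · refine ⟨{x | H.Reachable v x}, fun hvw => h (hvw.trans hwu).symm, ?_, hclosed v⟩
    exact iff_of_false (fun hvu => h hvu.symm) (not_not.mpr .rfl)
  · refine ⟨{x | H.Reachable u x}, fun huw => hwu huw.symm, ?_, hclosed u⟩
    exact iff_of_true .rfl h

namespace UntightTree

variable {ι κ : Type*} [Fintype ι] [Fintype κ] (T : SimpleGraph (ι ⊕ κ))

noncomputable def facilityLoad (y : ι → κ → ℝ) (i : ι) : ℝ :=
  ∑ j ∈ univ.filter fun j => T.Adj (inl i) (inr j), y i j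

noncomputable def clientLoad (y : ι → κ → ℝ) (j : κ) : ℝ :=
  ∑ i ∈ univ.filter fun i => T.Adj (inl i) (inr j), y i j

variable {T}

theorem sum_facilityLoad_sub_sum_clientLoad {C : Set (ι ⊕ κ)} {i₀ : ι} {j₀ : κ}
    (hadj : T.Adj (inl i₀) (inr j₀))
    (hC : ∀ i j, T.Adj (inl i) (inr j) → (i, j) ≠ (i₀, j₀) → (inl i ∈ C ↔ inr j ∈ C))
    (y : ι → κ → ℝ) :
    ∑ i ∈ univ.filter (inl · ∈ C), facilityLoad T y i
        - ∑ j ∈ univ.filter (inr · ∈ C), clientLoad T y j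
      = ((if inl i₀ ∈ C then 1 else 0) - (if inr j₀ ∈ C then 1 else 0)) * y i₀ j₀ := by
  set σ : ι ⊕ κ → ℝ := fun v => if v ∈ C then 1 else 0
  set w : ι × κ → ℝ := fun p => if T.Adj (inl p.1) (inr p.2) then y p.1 p.2 else 0
  have hsplit : ∑ i ∈ univ.filter (inl · ∈ C), facilityLoad T y i
        - ∑ j ∈ univ.filter (inr · ∈ C), clientLoad T y j
      = ∑ p : ι × κ, (σ (inl p.1) - σ (inr p.2)) * w p := by
    simp only [facilityLoad, clientLoad, sum_filter, Fintype.sum_prod_type, sub_mul,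
      sum_sub_distrib, σ, w, ite_mul, one_mul, zero_mul, ite_sum_zero]
    exact congrArg _ sum_comm
  rw [hsplit, Fintype.sum_eq_single (i₀, j₀)]
  · simp [w, hadj, σ]
  · rintro ⟨i, j⟩ hij
    by_cases hij_adj : T.Adj (inl i) (inr j)
    · simp [σ, hC i j hij_adj hij]
    · simp [w, hij_adj]

theorem modEq_of_cut {s : ℝ} {d : κ → ℝ} {y : ι → κ → ℝ} {C : Set (ι ⊕ κ)} {i₀ : ι} {j₀ : κ}
    (hadj : T.Adj (inl i₀) (inr j₀))
    (hC : ∀ i j, T.Adj (inl i) (inr j) → (i, j) ≠ (i₀, j₀) → (inl i ∈ C ↔ inr j ∈ C))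
    (hsat : ∀ i, inl i ∈ C → facilityLoad T y i = s)
    (hres : ∀ j, ∃ n : ℕ, d j - clientLoad T y j = n * s) :
    ((if inl i₀ ∈ C then 1 else 0) - (if inr j₀ ∈ C then 1 else 0)) * y i₀ j₀
      ≡ -∑ j ∈ univ.filter (inr · ∈ C), d j [PMOD s] := by
  choose n hn using hres
  have hload : ∀ j, clientLoad T y j = d j - n j * s := fun j => by linarith [hn j]
  rw [← sum_facilityLoad_sub_sum_clientLoad hadj hC, modEq_iff_zsmul',
    sum_congr rfl fun i hi => hsat i (mem_filter.mp hi).2]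
  refine ⟨-(#(univ.filter (inl · ∈ C)) + ∑ j ∈ univ.filter (inr · ∈ C), n j : ℤ), ?_⟩
  simp only [hload, sum_sub_distrib, sum_const, nsmul_eq_mul, ← sum_mul, zsmul_eq_mul]
  push_cast
  ring

theorem exists_modEq_weight (hT : T.IsAcyclic) {i₀ : ι} {j₀ : κ}
    (hadj : T.Adj (inl i₀) (inr j₀)) (s : ℝ) (d : κ → ℝ) (istar : ι) :
    ∃ K : ℝ, ∀ y : ι → κ → ℝ, (∀ i, i ≠ istar → facilityLoad T y i = s) →
      (∀ j, ∃ n : ℕ, d j - clientLoad T y j = n * s) → y i₀ j₀ ≡ K [PMOD s] := by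
  obtain ⟨C, hstar, hsplit, hclosed⟩ :=
    (SimpleGraph.isAcyclic_iff_forall_adj_isBridge.mp hT hadj).exists_separating_set (inl istar)
  have hC : ∀ i j, T.Adj (inl i) (inr j) → (i, j) ≠ (i₀, j₀) → (inl i ∈ C ↔ inr j ∈ C) :=
    fun i j hij hne => hclosed _ _ hij (by simpa [Prod.ext_iff] using hne)
  have hsat : ∀ y : ι → κ → ℝ, (∀ i, i ≠ istar → facilityLoad T y i = s) →
      ∀ i, inl i ∈ C → facilityLoad T y i = s :=
    fun y hy i hi => hy i (by rintro rfl; exact hstar hi)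
  by_cases hi₀ : inl i₀ ∈ C
  · refine ⟨-∑ j ∈ univ.filter (inr · ∈ C), d j, fun y hy hres => ?_⟩
    simpa [hi₀, hsplit.mp hi₀] using modEq_of_cut hadj hC (hsat y hy) hres
  · refine ⟨∑ j ∈ univ.filter (inr · ∈ C), d j, fun y hy hres => ?_⟩
    have hj₀ : inr j₀ ∈ C := not_not.mp (mt hsplit.mpr hi₀)
    simpa [hi₀, hj₀] using modEq_of_cut hadj hC (hsat y hy) hres

end UntightTree

theorem AddCommGroup.ModEq.eq_of_mem_Ico {α : Type*} [AddCommGroup α] [LinearOrder α]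
    [IsOrderedAddMonoid α] [Archimedean α] {p a b c : α} (hp : 0 < p) (h : a ≡ b [PMOD p])
    (ha : a ∈ Set.Ico c (c + p)) (hb : b ∈ Set.Ico c (c + p)) : a = b := by
  rw [← (toIcoMod_eq_self hp).mpr ha, ← (toIcoMod_eq_self hp).mpr hb]
  exact h.toIcoMod_eq_toIcoMod hp

open UntightTree in
theorem stmt_10_general {ι κ : Type*} [Fintype ι] [Fintype κ]
    (T : SimpleGraph (ι ⊕ κ)) (hT : T.IsTree)
    (s : ℝ) (hs : 0 < s) (d : κ → ℝ) (istar : ι)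
    (x x' : ι → κ → ℝ)
    (hx1 : ∀ i j, T.Adj (Sum.inl i) (Sum.inr j) → 0 < x i j ∧ x i j < s)
    (hx2 : ∀ i, i ≠ istar →
      (∑ j ∈ Finset.univ.filter fun j => T.Adj (Sum.inl i) (Sum.inr j), x i j) = s)
    (hx3 : ∀ j, ∃ n : ℕ,
      d j - (∑ i ∈ Finset.univ.filter fun i => T.Adj (Sum.inl i) (Sum.inr j), x i j)
        = n * s)
    (hx1' : ∀ i j, T.Adj (Sum.inl i) (Sum.inr j) → 0 < x' i j ∧ x' i j < s)
    (hx2' : ∀ i, i ≠ istar →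
      (∑ j ∈ Finset.univ.filter fun j => T.Adj (Sum.inl i) (Sum.inr j), x' i j) = s)
    (hx3' : ∀ j, ∃ n : ℕ,
      d j - (∑ i ∈ Finset.univ.filter fun i => T.Adj (Sum.inl i) (Sum.inr j), x' i j)
        = n * s) :
    ∀ i j, T.Adj (Sum.inl i) (Sum.inr j) → x i j = x' i j := by
  intro i j hadj
  obtain ⟨K, hK⟩ := exists_modEq_weight hT.isAcyclic hadj s d istar
  have hmem : ∀ y : ι → κ → ℝ, (0 < y i j ∧ y i j < s) → y i j ∈ Set.Ico 0 (0 + s) :=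
    fun y ⟨hpos, hlt⟩ => ⟨hpos.le, by rwa [zero_add]⟩
  exact ((hK x hx2 hx3).trans (hK x' hx2' hx3').symm).eq_of_mem_Ico hs
    (hmem x (hx1 i j hadj)) (hmem x' (hx1' i j hadj))

/-- Uniqueness of untight-tree edge weights: on a bipartite tree T with
designated root facility i*, edge weights in (0,s) that saturate every other
facility and leave every client a nonnegative integer multiple of s of residual
demand are uniquely determined. -/
theorem stmt_10 {ι κ : Type*} [Fintype ι] [Fintype κ]
    (T : SimpleGraph (ι ⊕ κ)) (hT : T.IsTree)
    (hbip : ∀ a b, T.Adj a b →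
      (∃ i j, (a = Sum.inl i ∧ b = Sum.inr j) ∨ (a = Sum.inr j ∧ b = Sum.inl i)))
    (s : ℝ) (hs : 0 < s) (d : κ → ℝ) (hd : ∀ j, 0 < d j) (istar : ι)
    (x x' : ι → κ → ℝ)
    (hx1 : ∀ i j, T.Adj (Sum.inl i) (Sum.inr j) → 0 < x i j ∧ x i j < s)
    (hx2 : ∀ i, i ≠ istar →
      (∑ j ∈ Finset.univ.filter fun j => T.Adj (Sum.inl i) (Sum.inr j), x i j) = s)
    (hx3 : ∀ j, ∃ n : ℕ,
      d j - (∑ i ∈ Finset.univ.filter fun i => T.Adj (Sum.inl i) (Sum.inr j), x i j)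
        = n * s)
    (hx1' : ∀ i j, T.Adj (Sum.inl i) (Sum.inr j) → 0 < x' i j ∧ x' i j < s)
    (hx2' : ∀ i, i ≠ istar →
      (∑ j ∈ Finset.univ.filter fun j => T.Adj (Sum.inl i) (Sum.inr j), x' i j) = s)
    (hx3' : ∀ j, ∃ n : ℕ,
      d j - (∑ i ∈ Finset.univ.filter fun i => T.Adj (Sum.inl i) (Sum.inr j), x' i j)
        = n * s) :
    ∀ i j, T.Adj (Sum.inl i) (Sum.inr j) → x i j = x' i j :=
  stmt_10_general T hT s hs d istar x x' hx1 hx2 hx3 hx1' hx2' hx3'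
end

section
/- The number of spanning trees of the complete bipartite graph K_{m,n} is m^{n−1} · n^{m−1}. -/
/-!
A map `s` on the vertices of `K_{V,W}` sending every vertex to a neighbour is a pair
`f : V → W`, `g : W → V`. If every orbit of `s` reaches a vertex `r`, the edges `{x, s x}`,
`x ≠ r`, form a spanning tree, and conversely every spanning tree arises this way from its
parent map towards `r`, the value `s r` being an arbitrary neighbour of `r`. So for each
`w₀ ∈ W` there are `τ · |V|` pairs rooted at `w₀`, where `τ` is the number of spanning trees.

Joyal's bijection matches all pairs `(f, g)` with the pairs rooted at some `w₀ ∈ W`: on the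
periodic points of `g ∘ f`, listed in increasing order, `g ∘ f` is recorded as a list, and `g` is
redirected so that `g ∘ f` runs through this list as a single cycle, whose last vertex `x` gives
the root `f x`. Hence `|W|^|V| · |V|^|W| = |W| · τ · |V|`.
-/

open Function Set

namespace Function

variable {α : Type*} {s s' : α → α} {A R : Set α}

theorem exists_iterate_mem_periodicPts [Finite α] (s : α → α) (x : α) :
    ∃ n, s^[n] x ∈ periodicPts s := by
  obtain ⟨i, j, hne, hij⟩ := Finite.exists_ne_map_eq_of_infinite (fun n : ℕ => s^[n] x)
  wlog hlt : i < j generalizing i j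
  · exact this j i hne.symm hij.symm (by omega)
  refine ⟨i, mk_mem_periodicPts (n := j - i) (by omega) ?_⟩
  rw [IsPeriodicPt, IsFixedPt, ← iterate_add_apply, Nat.sub_add_cancel hlt.le]
  exact hij.symm

theorem exists_iterate_mem_of_eqOn_compl (hs : EqOn s' s Rᶜ) (h : ∀ x, ∃ n, s^[n] x ∈ R)
    (x : α) : ∃ n, s'^[n] x ∈ R := by
  obtain ⟨n, hn⟩ := h x
  induction n generalizing x with
  | zero => exact ⟨0, hn⟩
  | succ n ih =>
    by_cases hx : x ∈ R
    · exact ⟨0, hx⟩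
    obtain ⟨m, hm⟩ := ih (s x) hn
    exact ⟨m + 1, by rwa [iterate_succ_apply, hs hx]⟩

theorem periodicPts_subset_of_mapsTo (hA : MapsTo s A A) (h : ∀ x, ∃ n, s^[n] x ∈ A) :
    periodicPts s ⊆ A := by
  rintro x ⟨p, hp, hx⟩
  obtain ⟨n, hn⟩ := h x
  have hmul : IsPeriodicPt s (n * p) x := hx.const_mul n
  rw [← hmul.eq, ← Nat.sub_add_cancel (Nat.le_mul_of_pos_right n hp), iterate_add_apply]
  exact hA.iterate _ hn

theorem _root_.Set.MapsTo.subset_periodicPts [Finite α] (hA : MapsTo s A A) (hinj : InjOn s A) :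
    A ⊆ periodicPts s := by
  intro x hx
  obtain ⟨n, hn, hper⟩ := (hA.restrict_inj.mpr hinj).mem_periodicPts ⟨x, hx⟩
  exact mk_mem_periodicPts hn (hper.map (g := Subtype.val) fun _ => rfl)

variable {r x : α} {n : ℕ}

def ReachesRoot (s : α → α) (r : α) : Prop := ∀ x, ∃ n, s^[n] x = r

noncomputable def hitTime (s : α → α) (r x : α) : ℕ := sInf {n | s^[n] x = r}

theorem hitTime_le (h : s^[n] x = r) : hitTime s r x ≤ n := Nat.sInf_le h

theorem ReachesRoot.iterate_hitTime (h : ReachesRoot s r) (x : α) : s^[hitTime s r x] x = r :=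
  Nat.sInf_mem (h x)

theorem ReachesRoot.hitTime_eq_zero_iff (h : ReachesRoot s r) : hitTime s r x = 0 ↔ x = r :=
  ⟨fun h0 => by simpa [h0] using h.iterate_hitTime x,
    fun hx => Nat.le_zero.mp (hitTime_le (n := 0) hx)⟩

theorem ReachesRoot.hitTime_apply (h : ReachesRoot s r) (hx : x ≠ r) :
    hitTime s r (s x) + 1 = hitTime s r x := by
  have hpos : hitTime s r x ≠ 0 := mt h.hitTime_eq_zero_iff.mp hx
  have hle : hitTime s r (s x) ≤ hitTime s r x - 1 := hitTime_le <| by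
    rw [← iterate_succ_apply, Nat.succ_eq_add_one, Nat.sub_add_cancel (by omega)]
    exact h.iterate_hitTime x
  have hge : hitTime s r x ≤ hitTime s r (s x) + 1 := hitTime_le <| by
    rw [iterate_succ_apply]
    exact h.iterate_hitTime (s x)
  omega

theorem reachesRoot_update_iff [DecidableEq α] {y : α} :
    ReachesRoot (update s r y) r ↔ ReachesRoot s r := by
  have key : ∀ {s s' : α → α}, EqOn s' s {r}ᶜ → ReachesRoot s r → ReachesRoot s' r :=
    fun hs h x => by
      simpa using exists_iterate_mem_of_eqOn_compl (R := {r}) hs (fun x => by simpa using h x) x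
  exact ⟨key fun x hx => (update_of_ne hx _ _).symm, key fun x hx => update_of_ne hx _ _⟩

end Function

namespace SimpleGraph

variable {α : Type*} {s : α → α} {r x y : α}

def parentGraph (s : α → α) (r : α) : SimpleGraph α :=
  fromEdgeSet {e | ∃ x, x ≠ r ∧ s(x, s x) = e}

theorem parentGraph_adj :
    (parentGraph s r).Adj x y ↔ x ≠ y ∧ (x ≠ r ∧ s x = y ∨ y ≠ r ∧ s y = x) := by
  simp only [parentGraph, fromEdgeSet_adj, Set.mem_ofPred_eq, Sym2.eq_iff]
  constructor
  · rintro ⟨⟨u, hu, ⟨rfl, rfl⟩ | ⟨rfl, rfl⟩⟩, hne⟩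
    exacts [⟨hne, .inl ⟨hu, rfl⟩⟩, ⟨hne, .inr ⟨hu, rfl⟩⟩]
  · rintro ⟨hne, ⟨hx, rfl⟩ | ⟨hy, rfl⟩⟩
    exacts [⟨⟨x, hx, .inl ⟨rfl, rfl⟩⟩, hne⟩, ⟨⟨y, hy, .inr ⟨rfl, rfl⟩⟩, hne⟩]

theorem parentGraph_update [DecidableEq α] : parentGraph (update s r y) r = parentGraph s r := by
  ext x z
  simp only [parentGraph_adj, update_apply]
  grind

theorem parentGraph_le {G : SimpleGraph α} (hs : ∀ x, x ≠ r → G.Adj x (s x)) :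
    parentGraph s r ≤ G := by
  intro x y hxy
  rcases (parentGraph_adj.mp hxy).2 with ⟨hx, rfl⟩ | ⟨hy, rfl⟩
  exacts [hs x hx, (hs y hy).symm]

theorem _root_.Function.ReachesRoot.parentGraph_adj_apply (h : ReachesRoot s r) (hx : x ≠ r) :
    (parentGraph s r).Adj x (s x) := by
  refine parentGraph_adj.mpr ⟨fun hsx => ?_, .inl ⟨hx, rfl⟩⟩
  have := h.hitTime_apply hx
  rw [← hsx] at this
  omega

theorem _root_.Function.ReachesRoot.reachable_parentGraph (h : ReachesRoot s r) (x : α) :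
    (parentGraph s r).Reachable x r := by
  induction hn : hitTime s r x using Nat.strong_induction_on generalizing x with
  | _ n ih =>
    by_cases hx : x = r
    · exact hx ▸ Reachable.rfl
    have := h.hitTime_apply hx
    exact (h.parentGraph_adj_apply hx).reachable.trans (ih _ (by omega) (s x) rfl)

theorem _root_.Function.ReachesRoot.connected_parentGraph (h : ReachesRoot s r) :
    (parentGraph s r).Connected :=
  have : Nonempty α := ⟨r⟩
  ⟨fun x y => (h.reachable_parentGraph x).trans (h.reachable_parentGraph y).symm⟩

/-- Distinct non-root vertices give distinct edges: otherwise each would be the other's parent. -/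
theorem _root_.Function.ReachesRoot.isTree_parentGraph [Finite α] (h : ReachesRoot s r) :
    (parentGraph s r).IsTree := by
  refine isTree_iff_connected_and_card.mpr ⟨h.connected_parentGraph, ?_⟩
  let e : {x // x ≠ r} → (parentGraph s r).edgeSet := fun x =>
    ⟨s(x.1, s x.1), h.parentGraph_adj_apply x.2⟩
  have he : Bijective e := by
    refine ⟨fun ⟨x, hx⟩ ⟨y, hy⟩ hxy => ?_, fun ⟨e, he⟩ => ?_⟩
    · have hxy := congrArg Subtype.val hxy
      simp only [e, Sym2.eq_iff] at hxy
      rcases hxy with ⟨rfl, -⟩ | ⟨hxy, rfl⟩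
      · rfl
      · have h1 := h.hitTime_apply hx
        have h2 := h.hitTime_apply hy
        rw [← hxy] at h2
        omega
    · induction e using Sym2.ind with
      | _ x y =>
      rcases (parentGraph_adj.mp he).2 with ⟨hx, hxy⟩ | ⟨hy, hyx⟩
      · exact ⟨⟨x, hx⟩, Subtype.ext (by simp [e, hxy])⟩
      · exact ⟨⟨y, hy⟩, Subtype.ext (by simp [e, hyx, Sym2.eq_swap])⟩
  have hcompl := Set.ncard_compl_add_ncard ({r} : Set α)
  rw [Set.ncard_singleton, ← Nat.card_coe_set_eq] at hcompl
  rw [← Nat.card_congr (Equiv.ofBijective e he), ← hcompl]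
  rfl

theorem _root_.Function.ReachesRoot.hitTime_le_length_add (h : ReachesRoot s r)
    (p : (parentGraph s r).Walk x y) : hitTime s r x ≤ p.length + hitTime s r y := by
  induction p with
  | nil => simp
  | cons hxy p ih =>
    rw [Walk.length_cons]
    rcases (parentGraph_adj.mp hxy).2 with ⟨hx, rfl⟩ | ⟨hy, rfl⟩
    · have := h.hitTime_apply hx
      omega
    · have := h.hitTime_apply hy
      omega

theorem _root_.Function.ReachesRoot.dist_parentGraph (h : ReachesRoot s r) (x : α) :
    (parentGraph s r).dist x r = hitTime s r x := by
  refine le_antisymm ?_ ?_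
  · induction hn : hitTime s r x using Nat.strong_induction_on generalizing x with
    | _ n ih =>
      by_cases hx : x = r
      · simp [hx]
      have hn' := h.hitTime_apply hx
      obtain ⟨p, hp⟩ := (h.reachable_parentGraph (s x)).exists_walk_length_eq_dist
      have hcons := dist_le (.cons (h.parentGraph_adj_apply hx) p)
      have := ih _ (by omega) (s x) rfl
      rw [Walk.length_cons] at hcons
      omega
  · obtain ⟨p, hp⟩ := (h.reachable_parentGraph x).exists_walk_length_eq_dist
    simpa [hp, (h.hitTime_eq_zero_iff).mpr rfl] using h.hitTime_le_length_add p

variable {T : SimpleGraph α}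

theorem Connected.exists_adj_dist_lt (hT : T.Connected) (hx : x ≠ r) :
    ∃ y, T.Adj x y ∧ T.dist y r < T.dist x r := by
  obtain ⟨p, hp⟩ := hT.exists_walk_length_eq_dist x r
  cases p with
  | nil => exact absurd rfl hx
  | cons hxy q =>
    have := dist_le q
    rw [Walk.length_cons] at hp
    exact ⟨_, hxy, by omega⟩

open Classical in
noncomputable def treeParent (T : SimpleGraph α) (r x : α) : α :=
  if h : ∃ y, T.Adj x y ∧ T.dist y r < T.dist x r then h.choose else x

theorem Connected.treeParent_spec (hT : T.Connected) (hx : x ≠ r) :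
    T.Adj x (treeParent T r x) ∧ T.dist (treeParent T r x) r < T.dist x r := by
  have h := hT.exists_adj_dist_lt hx
  rw [treeParent, dif_pos h]
  exact h.choose_spec

theorem Connected.reachesRoot_treeParent (hT : T.Connected) : ReachesRoot (treeParent T r) r := by
  intro x
  induction hn : T.dist x r using Nat.strong_induction_on generalizing x with
  | _ n ih =>
    by_cases hx : x = r
    · exact ⟨0, hx⟩
    obtain ⟨m, hm⟩ := ih _ (hn ▸ (hT.treeParent_spec hx).2) _ rfl
    exact ⟨m + 1, by rwa [iterate_succ_apply]⟩

theorem IsTree.parentGraph_treeParent (hT : T.IsTree) : parentGraph (treeParent T r) r = T :=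
  (isTree_iff_minimal_connected.mp hT).eq_of_le
    hT.connected.reachesRoot_treeParent.connected_parentGraph
    (parentGraph_le fun _ hx => (hT.connected.treeParent_spec hx).1)

theorem _root_.Function.ReachesRoot.treeParent_parentGraph (h : ReachesRoot s r) (hx : x ≠ r) :
    treeParent (parentGraph s r) r x = s x := by
  obtain ⟨hadj, hlt⟩ := h.connected_parentGraph.treeParent_spec hx
  rw [h.dist_parentGraph, h.dist_parentGraph] at hlt
  rcases (parentGraph_adj.mp hadj).2 with ⟨-, hy⟩ | ⟨hy, hyx⟩
  · exact hy.symm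
  · have := h.hitTime_apply hy
    rw [hyx] at this
    omega

noncomputable def rootedMapEquiv [Finite α] [DecidableEq α] (G : SimpleGraph α) (r : α) :
    {s : α → α // (∀ x, G.Adj x (s x)) ∧ ReachesRoot s r} ≃
      {T : SimpleGraph α // T ≤ G ∧ T.IsTree} × G.neighborSet r where
  toFun s := (⟨parentGraph s r, parentGraph_le fun x _ => s.2.1 x, s.2.2.isTree_parentGraph⟩,
    ⟨s.1 r, s.2.1 r⟩)
  invFun T := ⟨update (treeParent T.1 r) r T.2, fun x => by
      by_cases hx : x = r
      · subst hx
        rw [update_self]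
        exact T.2.2
      · rw [update_of_ne hx]
        exact T.1.2.1 (T.1.2.2.connected.treeParent_spec hx).1,
    reachesRoot_update_iff.mpr T.1.2.2.connected.reachesRoot_treeParent⟩
  left_inv s := Subtype.ext <| funext fun x => by
    by_cases hx : x = r
    · subst hx
      simp
    · simp [update_of_ne hx, s.2.2.treeParent_parentGraph hx]
  right_inv T := by
    ext : 1
    · exact Subtype.ext <| by simp [parentGraph_update, T.1.2.2.parentGraph_treeParent]
    · exact Subtype.ext <| by simp

end SimpleGraph

theorem List.iterate_getElem_of_forall_mem_eq_formPerm {α : Type*} [DecidableEq α] {l : List α}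
    {s : α → α} (hl : l.Nodup) (hs : ∀ x ∈ l, s x = l.formPerm x) {i j : ℕ}
    (hij : i + j < l.length) : s^[j] l[i] = l[i + j] := by
  induction j with
  | zero => rfl
  | succ j ih =>
    rw [iterate_succ_apply', ih (by omega), hs _ (getElem_mem _), formPerm_apply_getElem _ hl]
    simp only [Nat.add_assoc, Nat.mod_eq_of_lt hij]

namespace CompleteBipartite

open SimpleGraph Sum

variable {V W : Type*}

section Step

variable {f : V → W} {g : W → V} {w₀ : W}

def step (f : V → W) (g : W → V) : V ⊕ W → V ⊕ W := Sum.elim (inr ∘ f) (inl ∘ g)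

def IsRootedAt (f : V → W) (g : W → V) (w₀ : W) : Prop := ∀ v, ∃ n, f ((g ∘ f)^[n] v) = w₀

theorem step_iterate_two_mul (n : ℕ) (v : V) :
    (step f g)^[2 * n] (inl v) = inl ((g ∘ f)^[n] v) := by
  induction n generalizing v with
  | zero => rfl
  | succ n ih =>
    rw [Nat.mul_succ, iterate_add_apply]
    exact (ih (g (f v))).trans (congrArg inl (iterate_succ_apply _ _ _).symm)

theorem step_iterate_two_mul_add_one (n : ℕ) (v : V) :
    (step f g)^[2 * n + 1] (inl v) = inr (f ((g ∘ f)^[n] v)) := by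
  rw [iterate_succ_apply', step_iterate_two_mul]
  rfl

theorem reachesRoot_step_iff : ReachesRoot (step f g) (inr w₀) ↔ IsRootedAt f g w₀ := by
  constructor
  · intro h v
    obtain ⟨k, hk⟩ := h (inl v)
    obtain ⟨n, rfl | rfl⟩ := Nat.even_or_odd' k
    · simp [step_iterate_two_mul] at hk
    · exact ⟨n, by simpa [step_iterate_two_mul_add_one] using hk⟩
  · intro h u
    cases u with
    | inl v =>
      obtain ⟨n, hn⟩ := h v
      exact ⟨2 * n + 1, by rw [step_iterate_two_mul_add_one, hn]⟩
    | inr w =>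
      obtain ⟨n, hn⟩ := h (g w)
      exact ⟨2 * n + 1 + 1, by
        rw [iterate_succ_apply]
        exact (step_iterate_two_mul_add_one n (g w)).trans (congrArg inr hn)⟩

theorem completeBipartiteGraph_adj_step (u : V ⊕ W) :
    (completeBipartiteGraph V W).Adj u (step f g u) := by
  cases u <;> simp [step]

def stepEquiv : (V → W) × (W → V) ≃
    {s : V ⊕ W → V ⊕ W // ∀ u, (completeBipartiteGraph V W).Adj u (s u)} where
  toFun p := ⟨step p.1 p.2, completeBipartiteGraph_adj_step⟩
  invFun s := (fun v => (s.1 (inl v)).getRight (by simpa using s.2 (inl v)),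
    fun w => (s.1 (inr w)).getLeft (by simpa using s.2 (inr w)))
  left_inv p := rfl
  right_inv s := Subtype.ext <| funext fun u => by
    cases u <;> simp [step, inr_getRight, inl_getLeft]

end Step

section Redirect

variable (f : V → W)

noncomputable def redirect (S : Set V) (τ : V → V) (g : W → V) : W → V :=
  extend (S.domRestrict f) (S.domRestrict τ) g

variable {f} {S : Set V} {τ τ' : V → V} {g : W → V}

theorem redirect_apply_of_mem (hf : InjOn f S) {x : V} (hx : x ∈ S) :
    redirect f S τ g (f x) = τ x :=
  hf.injective.extend_apply _ g ⟨x, hx⟩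

theorem redirect_apply_of_notMem {w : W} (hw : w ∉ f '' S) : redirect f S τ g w = g w :=
  extend_apply' _ _ _ fun ⟨⟨x, hx⟩, hxw⟩ => hw ⟨x, hx, hxw⟩

theorem redirect_redirect : redirect f S τ (redirect f S τ' g) = redirect f S τ g := by
  classical
  funext w
  simp only [redirect, extend_def]
  split_ifs <;> rfl

theorem redirect_eq_self (hf : InjOn f S) (h : ∀ x ∈ S, g (f x) = τ x) :
    redirect f S τ g = g := by
  funext w
  by_cases hw : w ∈ f '' S
  · obtain ⟨x, hx, rfl⟩ := hw
    rw [redirect_apply_of_mem hf hx, h x hx]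
  · exact redirect_apply_of_notMem hw

theorem exists_iterate_redirect_comp_mem (hf : InjOn f S) (hτ : MapsTo τ S S)
    (h : ∀ x, ∃ n, (g ∘ f)^[n] x ∈ f ⁻¹' (f '' S)) (x : V) :
    ∃ n, (redirect f S τ g ∘ f)^[n] x ∈ S := by
  have heq : EqOn (redirect f S τ g ∘ f) (g ∘ f) (f ⁻¹' (f '' S))ᶜ :=
    fun y hy => redirect_apply_of_notMem hy
  obtain ⟨n, y, hy, hfy⟩ := exists_iterate_mem_of_eqOn_compl heq h x
  refine ⟨n + 1, ?_⟩
  rw [iterate_succ_apply', comp_apply, ← hfy, redirect_apply_of_mem hf hy]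
  exact hτ hy

noncomputable def cycleAlong [DecidableEq V] (f : V → W) (l : List V) (g : W → V) : W → V :=
  redirect f {x | x ∈ l} l.formPerm g

end Redirect

section Relabel

variable [LinearOrder V]

/-- Sends the `i`-th smallest element of `l` to `l[i]`. -/
def relabel (l : List V) (x : V) : V := l.getD ((l.toFinset.sort (· ≤ ·)).idxOf x) x

theorem map_relabel_sort {l : List V} (hl : l.Nodup) :
    (l.toFinset.sort (· ≤ ·)).map (relabel l) = l := by
  have hlen : (l.toFinset.sort (· ≤ ·)).length = l.length := by
    rw [Finset.length_sort, List.toFinset_card_of_nodup hl]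
  refine List.ext_getElem (by rw [List.length_map, hlen]) fun i hi _ => ?_
  rw [List.getElem_map, relabel, (Finset.sort_nodup _ _).idxOf_getElem,
    List.getD_eq_getElem _ _ (by simpa [hlen] using hi)]

theorem mapsTo_relabel {l : List V} (hl : l.Nodup) :
    MapsTo (relabel l) {x | x ∈ l} {x | x ∈ l} := fun x hx => by
  have hx : x ∈ l.toFinset.sort (· ≤ ·) := by simpa using hx
  simpa [map_relabel_sort hl] using List.mem_map_of_mem (f := relabel l) hx

theorem injOn_relabel {l : List V} (hl : l.Nodup) : InjOn (relabel l) {x | x ∈ l} :=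
  fun x hx y hy => List.inj_on_of_nodup_map ((map_relabel_sort hl).symm ▸ hl)
    (by simpa using hx) (by simpa using hy)

noncomputable def relabelAlong (f : V → W) (l : List V) (g : W → V) : W → V :=
  redirect f {x | x ∈ l} (relabel l) g

end Relabel

section Spine

variable {f : V → W} {g : W → V} {w₀ : W}

open Classical in
noncomputable def spineLength (hr : IsRootedAt f g w₀) : ℕ := Nat.find (hr (g w₀))

noncomputable def spine (hr : IsRootedAt f g w₀) : List V :=
  (List.range (spineLength hr + 1)).map fun j => (g ∘ f)^[j] (g w₀)

variable (hr : IsRootedAt f g w₀)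

theorem length_spine : (spine hr).length = spineLength hr + 1 := by
  simp [spine]

theorem getElem_spine {j : ℕ} (hj : j < (spine hr).length) :
    (spine hr)[j] = (g ∘ f)^[j] (g w₀) := by
  simp only [spine, List.getElem_map, List.getElem_range]

theorem apply_iterate_spineLength : f ((g ∘ f)^[spineLength hr] (g w₀)) = w₀ := by
  classical
  exact Nat.find_spec (hr (g w₀))

theorem apply_iterate_ne_of_lt_spineLength {j : ℕ} (hj : j < spineLength hr) :
    f ((g ∘ f)^[j] (g w₀)) ≠ w₀ := by
  classical
  exact Nat.find_min (hr (g w₀)) hj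

/-- Equal values of `f` at times `i < j` would propagate to times `i + t`, `j + t`; taking
`j + t = spineLength` contradicts its minimality. -/
theorem apply_getElem_spine_injective {i j : ℕ} (hi : i < (spine hr).length)
    (hj : j < (spine hr).length) (h : f (spine hr)[i] = f (spine hr)[j]) : i = j := by
  rw [getElem_spine, getElem_spine] at h
  rw [length_spine] at hi hj
  wlog hij : i < j generalizing i j
  · rcases Nat.lt_or_eq_of_le (not_lt.mp hij) with hji | rfl
    · exact (this hj hi h.symm hji).symm
    · rfl
  have hshift : ∀ t, f ((g ∘ f)^[i + t] (g w₀)) = f ((g ∘ f)^[j + t] (g w₀)) := by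
    intro t
    induction t with
    | zero => exact h
    | succ t ih =>
      rw [← Nat.add_assoc, ← Nat.add_assoc, iterate_succ_apply', iterate_succ_apply', comp_apply,
        comp_apply, ih]
  have := hshift (spineLength hr - j)
  rw [show j + (spineLength hr - j) = spineLength hr by omega, apply_iterate_spineLength hr] at this
  exact absurd this (apply_iterate_ne_of_lt_spineLength hr (by omega))

theorem spine_nodup : (spine hr).Nodup :=
  List.nodup_iff_injective_getElem.mpr fun ⟨_, hi⟩ ⟨_, hj⟩ h =>
    Fin.ext (apply_getElem_spine_injective hr hi hj (congrArg f h))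

theorem injOn_spine : InjOn f {x | x ∈ spine hr} := by
  rintro _ hx _ hy hxy
  obtain ⟨i, hi, rfl⟩ := List.mem_iff_getElem.mp hx
  obtain ⟨j, hj, rfl⟩ := List.mem_iff_getElem.mp hy
  obtain rfl := apply_getElem_spine_injective hr hi hj hxy
  rfl

theorem spine_ne_nil : spine hr ≠ [] :=
  List.ne_nil_of_length_pos (by rw [length_spine]; omega)

theorem apply_getLast_spine : f ((spine hr).getLast (spine_ne_nil hr)) = w₀ := by
  rw [List.getLast_eq_getElem, getElem_spine, length_spine]
  exact apply_iterate_spineLength hr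

theorem apply_eq_formPerm_spine [DecidableEq V] :
    ∀ x ∈ spine hr, g (f x) = (spine hr).formPerm x := by
  intro x hx
  obtain ⟨i, hi, rfl⟩ := List.mem_iff_getElem.mp hx
  rw [List.formPerm_apply_getElem _ (spine_nodup hr)]
  have hlen := length_spine hr
  rcases Nat.lt_or_ge (i + 1) (spine hr).length with h | h
  · simp only [Nat.mod_eq_of_lt h, getElem_spine, iterate_succ_apply', comp_apply]
  · obtain rfl : i = spineLength hr := by omega
    simp only [hlen, Nat.mod_self, getElem_spine, apply_iterate_spineLength hr, iterate_zero_apply]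

theorem cycleAlong_spine [DecidableEq V] : cycleAlong f (spine hr) g = g :=
  redirect_eq_self (injOn_spine hr) (apply_eq_formPerm_spine hr)

theorem spine_eq [DecidableEq V] {l : List V} (hl : l ≠ []) (hnd : l.Nodup)
    (hinj : InjOn f {x | x ∈ l}) (hg : ∀ x ∈ l, g (f x) = l.formPerm x)
    (hlast : f (l.getLast hl) = w₀) : spine hr = l := by
  have hpos : 0 < l.length := List.length_pos_iff.mpr hl
  have hhead : g w₀ = l[0] := by
    rw [← hlast, hg _ (List.getLast_mem hl), List.getLast_eq_getElem,
      List.formPerm_apply_getElem _ hnd]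
    simp only [Nat.sub_add_cancel hpos, Nat.mod_self]
  have hiter : ∀ j (hj : j < l.length), (g ∘ f)^[j] (g w₀) = l[j] := fun j hj => by
    have := List.iterate_getElem_of_forall_mem_eq_formPerm (s := g ∘ f) hnd hg (i := 0) (j := j)
      (by omega)
    simp only [Nat.zero_add] at this
    rwa [hhead]
  have hK : spineLength hr = l.length - 1 := by
    classical
    rw [spineLength, Nat.find_eq_iff]
    refine ⟨by rw [hiter _ (by omega), ← hlast, List.getLast_eq_getElem], fun n hn heq => ?_⟩
    rw [hiter n (by omega), ← hlast, List.getLast_eq_getElem] at heq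
    have := hinj (List.getElem_mem _) (List.getElem_mem _) heq
    rw [hnd.getElem_inj_iff] at this
    omega
  exact List.ext_getElem (by rw [length_spine, hK]; omega) fun j _ hj => by
    rw [getElem_spine, hiter j hj]

end Spine

section Joyal

variable {f : V → W} {g : W → V} {w₀ : W}

theorem injOn_periodicPts_comp : InjOn f (periodicPts (g ∘ f)) :=
  fun _ hx _ hy hxy => (bijOn_periodicPts (g ∘ f)).injOn hx hy (congrArg g hxy)

variable [LinearOrder V] [Finite V]

noncomputable def periodicList (f : V → W) (g : W → V) : List V :=
  ((toFinite (periodicPts (g ∘ f))).toFinset.sort (· ≤ ·)).map (g ∘ f)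

theorem mem_periodicList {x : V} : x ∈ periodicList f g ↔ x ∈ periodicPts (g ∘ f) := by
  simp only [periodicList, List.mem_map, Finset.mem_sort, Finite.mem_toFinset]
  exact ⟨fun ⟨y, hy, hyx⟩ => hyx ▸ (bijOn_periodicPts (g ∘ f)).mapsTo hy,
    fun hx => (bijOn_periodicPts (g ∘ f)).surjOn hx⟩

theorem setOf_mem_periodicList : {x | x ∈ periodicList f g} = periodicPts (g ∘ f) :=
  Set.ext fun _ => mem_periodicList

theorem periodicList_nodup : (periodicList f g).Nodup :=
  (Finset.sort_nodup _ _).map_on fun _ hx _ hy =>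
    (bijOn_periodicPts (g ∘ f)).injOn (by simpa using hx) (by simpa using hy)

theorem periodicList_ne_nil [Nonempty V] : periodicList f g ≠ [] := by
  obtain ⟨n, hn⟩ := exists_iterate_mem_periodicPts (g ∘ f) (Classical.arbitrary V)
  exact List.ne_nil_of_mem (mem_periodicList.mpr hn)

theorem injOn_periodicList : InjOn f {x | x ∈ periodicList f g} := by
  rw [setOf_mem_periodicList]
  exact injOn_periodicPts_comp

theorem cycleAlong_periodicList_apply {x : V} (hx : x ∈ periodicList f g) :
    cycleAlong f (periodicList f g) g (f x) = (periodicList f g).formPerm x :=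
  redirect_apply_of_mem injOn_periodicList hx

theorem isRootedAt_cycleAlong [Nonempty V] :
    IsRootedAt f (cycleAlong f (periodicList f g) g)
      (f ((periodicList f g).getLast (periodicList_ne_nil (f := f) (g := g)))) := by
  have hreach (x : V) : ∃ n, (g ∘ f)^[n] x ∈ f ⁻¹' (f '' {x | x ∈ periodicList f g}) := by
    obtain ⟨n, hn⟩ := exists_iterate_mem_periodicPts (g ∘ f) x
    exact ⟨n, mem_image_of_mem f (mem_periodicList.mpr hn)⟩
  intro v
  obtain ⟨n, hn⟩ := exists_iterate_redirect_comp_mem injOn_periodicList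
    (fun _ hx => List.formPerm_apply_mem_of_mem hx) hreach v
  obtain ⟨i, hi, hx⟩ := List.mem_iff_getElem.mp
    (show (cycleAlong f (periodicList f g) g ∘ f)^[n] v ∈ periodicList f g from hn)
  refine ⟨(periodicList f g).length - 1 - i + n, ?_⟩
  rw [iterate_add_apply, ← hx, List.iterate_getElem_of_forall_mem_eq_formPerm
    (s := cycleAlong f (periodicList f g) g ∘ f) periodicList_nodup
    (fun _ hx => cycleAlong_periodicList_apply hx) (by omega), List.getLast_eq_getElem]
  congr 2
  omega

/-- Redirecting `g` along the sorted spine makes `g ∘ f` permute the spine, and every orbit still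
reaches the spine, so the spine becomes exactly the set of periodic points. -/
theorem periodicPts_relabelAlong_spine (hr : IsRootedAt f g w₀) :
    periodicPts (relabelAlong f (spine hr) g ∘ f) = {x | x ∈ spine hr} := by
  have hinj := injOn_spine hr
  have hrel : EqOn (relabelAlong f (spine hr) g ∘ f) (relabel (spine hr)) {x | x ∈ spine hr} :=
    fun _ hx => redirect_apply_of_mem hinj hx
  have hmaps := (mapsTo_relabel (spine_nodup hr)).congr hrel.symm
  have hreach (x : V) : ∃ n, (g ∘ f)^[n] x ∈ f ⁻¹' (f '' {x | x ∈ spine hr}) := by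
    obtain ⟨n, hn⟩ := hr x
    exact ⟨n, _, List.getLast_mem (spine_ne_nil hr), (apply_getLast_spine hr).trans hn.symm⟩
  exact (periodicPts_subset_of_mapsTo hmaps <| exists_iterate_redirect_comp_mem hinj
    (mapsTo_relabel (spine_nodup hr)) hreach).antisymm
    (hmaps.subset_periodicPts ((injOn_relabel (spine_nodup hr)).congr hrel.symm))

theorem periodicList_relabelAlong_spine (hr : IsRootedAt f g w₀) :
    periodicList f (relabelAlong f (spine hr) g) = spine hr := by
  have hset : (toFinite (periodicPts (relabelAlong f (spine hr) g ∘ f))).toFinset =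
      (spine hr).toFinset := by
    ext x
    simp [periodicPts_relabelAlong_spine hr]
  rw [periodicList, hset]
  refine (List.map_inj_left.mpr fun x hx => ?_).trans (map_relabel_sort (spine_nodup hr))
  exact redirect_apply_of_mem (injOn_spine hr) (by simpa using hx)

theorem spine_isRootedAt_cycleAlong [Nonempty V] :
    spine (isRootedAt_cycleAlong (f := f) (g := g)) = periodicList f g :=
  spine_eq _ periodicList_ne_nil periodicList_nodup injOn_periodicList
    (fun _ hx => cycleAlong_periodicList_apply hx) rfl

theorem relabelAlong_cycleAlong :
    relabelAlong f (periodicList f g) (cycleAlong f (periodicList f g) g) = g := by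
  have hsort : ((periodicList f g).toFinset.sort (· ≤ ·)).map (g ∘ f) = periodicList f g := by
    have : (periodicList f g).toFinset = (toFinite (periodicPts (g ∘ f))).toFinset := by
      ext x
      simp [mem_periodicList]
    rw [this]
    rfl
  rw [relabelAlong, cycleAlong, redirect_redirect]
  refine redirect_eq_self injOn_periodicList fun x hx => ?_
  have := (map_relabel_sort periodicList_nodup).trans hsort.symm
  exact (List.map_inj_left.mp this x (by simpa using hx)).symm

noncomputable def joyalEquiv [Nonempty V] :
    (V → W) × (W → V) ≃ Σ w₀ : W, {p : (V → W) × (W → V) // IsRootedAt p.1 p.2 w₀} where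
  toFun p := ⟨_, (p.1, cycleAlong p.1 (periodicList p.1 p.2) p.2), isRootedAt_cycleAlong⟩
  invFun q := (q.2.1.1, relabelAlong q.2.1.1 (spine q.2.2) q.2.1.2)
  left_inv p := Prod.ext rfl <| by
    simp only [spine_isRootedAt_cycleAlong, relabelAlong_cycleAlong]
  right_inv := by
    rintro ⟨w₀, ⟨f, g⟩, hr⟩
    refine Sigma.subtype_ext ?_ (Prod.ext rfl ?_)
    · exact (congrArg f (List.getLast_congr _ _ (periodicList_relabelAlong_spine hr))).trans
        (apply_getLast_spine hr)
    · dsimp only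
      rw [periodicList_relabelAlong_spine hr, cycleAlong, relabelAlong, redirect_redirect]
      exact cycleAlong_spine hr

end Joyal

theorem card_neighborSet_inr (w₀ : W) :
    Nat.card ((completeBipartiteGraph V W).neighborSet (inr w₀)) = Nat.card V := by
  have : (completeBipartiteGraph V W).neighborSet (inr w₀) = Set.range inl := by
    ext u
    cases u <;> simp
  rw [this, Nat.card_range_of_injective inl_injective]

theorem card_isRootedAt [Finite V] [Finite W] (w₀ : W) :
    Nat.card {p : (V → W) × (W → V) // IsRootedAt p.1 p.2 w₀} =
      Nat.card {T // T ≤ completeBipartiteGraph V W ∧ T.IsTree} * Nat.card V := by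
  classical
  have e := ((stepEquiv (V := V) (W := W)).subtypeEquiv fun p => reachesRoot_step_iff.symm).trans
    (Equiv.subtypeSubtypeEquivSubtypeInter _ fun s => ReachesRoot s (inr w₀))
  rw [Nat.card_congr (e.trans (rootedMapEquiv _ _)), Nat.card_prod, card_neighborSet_inr]

end CompleteBipartite

/-- The number of spanning trees of the complete bipartite graph K_{m,n} is
m^(n-1) · n^(m-1). -/
theorem stmt_11 {V W : Type*} [Fintype V] [Fintype W]
    (hm : 1 ≤ Fintype.card V) (hn : 1 ≤ Fintype.card W) :
    Nat.card {T : SimpleGraph (V ⊕ W) //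
        T ≤ completeBipartiteGraph V W ∧ T.IsTree} =
      Fintype.card V ^ (Fintype.card W - 1) *
        Fintype.card W ^ (Fintype.card V - 1) := by
  have : Nonempty V := Fintype.card_pos_iff.mp hm
  let : LinearOrder V := LinearOrder.lift' _ (Fintype.equivFin V).injective
  have hcount := Nat.card_congr (CompleteBipartite.joyalEquiv (V := V) (W := W))
  rw [Nat.card_prod, Nat.card_fun, Nat.card_fun, Nat.card_sigma] at hcount
  simp only [CompleteBipartite.card_isRootedAt, Finset.sum_const, Finset.card_univ, smul_eq_mul,
    Nat.card_eq_fintype_card] at hcount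
  set m := Fintype.card V
  set n := Fintype.card W
  set τ := Nat.card {T // T ≤ completeBipartiteGraph V W ∧ T.IsTree}
  have hm' : n ^ m = n ^ (m - 1) * n := by rw [← pow_succ, Nat.sub_add_cancel hm]
  have hn' : m ^ n = m ^ (n - 1) * m := by rw [← pow_succ, Nat.sub_add_cancel hn]
  refine Nat.eq_of_mul_eq_mul_left (Nat.mul_pos hn hm) ?_
  calc n * m * τ = n ^ m * m ^ n := by rw [hcount]; ring
    _ = n * m * (m ^ (n - 1) * n ^ (m - 1)) := by rw [hm', hn']; ring
end

section
/- In Algorithm 2’s branching step: if (x, y) is a vertex of the single-sink LP polytope with exactly two fractional components y_{i1}, y_{i2} where s_{i1} ≥ s_{i2}, then the point (x¹, y¹) defined by x¹_{i1} = x_{i1} + x_{i2}, x¹_{i2} = 0, y¹_{i1} = 1, y¹_{i2} = 0 (all other coordinates unchanged) is a feasible integral solution, and its cost satisfies cᵀx¹ + fᵀy¹ ≤ (cᵀx + fᵀy) + (c_{i1} s_{i1} + f_{i1}). -/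
open scoped Classical

/-!
Every `y i` other than `y i₁, y i₂` is `0` or `1` and `∑ y = k`, so `y i₁ + y i₂` is an integer
strictly between `0` and `2`, i.e. `1`. Hence `y₁` is integral with the same sum, and the merged
flow `x i₁ + x i₂ ≤ s i₁ y i₁ + s i₂ y i₂ ≤ s i₁ (y i₁ + y i₂) = s i₁` fits into facility `i₁`.
The extra cost is `c i₁ x i₂ - c i₂ x i₂ + f i₁ (1 - y i₁) - f i₂ y i₂ ≤ c i₁ s i₁ + f i₁`.
-/

section Update

variable {ι R : Type*} [Fintype ι] [DecidableEq ι] [CommRing R]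

theorem Fintype.sum_mul_update (w g : ι → R) (i : ι) (a : R) :
    ∑ j, w j * Function.update g i a j = ∑ j, w j * g j + w i * (a - g i) := by
  have hupd : Function.update g i a = g + Pi.single i (a - g i) := by
    ext j
    rcases eq_or_ne j i with rfl | h <;> simp [*]
  simp [hupd, mul_add, Finset.sum_add_distrib, Pi.single_apply]

theorem Fintype.sum_mul_update_update (w g : ι → R) {i₁ i₂ : ι} (hne : i₁ ≠ i₂) (a b : R) :
    ∑ j, w j * Function.update (Function.update g i₁ a) i₂ b j
      = ∑ j, w j * g j + w i₁ * (a - g i₁) + w i₂ * (b - g i₂) := by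
  rw [Fintype.sum_mul_update, Fintype.sum_mul_update, Function.update_of_ne hne.symm]

end Update

theorem Finset.exists_int_sum_eq {ι R : Type*} [Ring R] {s : Finset ι} {y : ι → R}
    (h : ∀ i ∈ s, ∃ m : ℤ, y i = m) : ∃ m : ℤ, ∑ i ∈ s, y i = m := by
  choose! m hm using h
  exact ⟨∑ i ∈ s, m i, by rw [Int.cast_sum]; exact Finset.sum_congr rfl hm⟩

theorem add_eq_one_of_sum_eq_int {ι : Type*} [Fintype ι] [DecidableEq ι] {y : ι → ℝ} {k : ℤ}
    (hyk : ∑ i, y i = k) {i₁ i₂ : ι} (hne : i₁ ≠ i₂)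
    (hint : ∀ i, i ≠ i₁ → i ≠ i₂ → y i = 0 ∨ y i = 1)
    (h₁ : 0 ≤ y i₁ ∧ y i₁ ≤ 1) (h₂ : 0 < y i₂ ∧ y i₂ < 1) :
    y i₁ + y i₂ = 1 := by
  obtain ⟨m, hm⟩ : ∃ m : ℤ, ∑ i ∈ {i₁, i₂}ᶜ, y i = m := by
    refine Finset.exists_int_sum_eq fun i hi => ?_
    simp only [Finset.mem_compl, Finset.mem_insert, Finset.mem_singleton, not_or] at hi
    rcases hint i hi.1 hi.2 with h | h
    exacts [⟨0, by simp [h]⟩, ⟨1, by simp [h]⟩]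
  have hpair : y i₁ + y i₂ = ((k - m : ℤ) : ℝ) := by
    rw [← Finset.sum_add_sum_compl {i₁, i₂}, Finset.sum_pair hne, hm] at hyk
    push_cast
    linarith
  have hpos : (0 : ℝ) < (k - m : ℤ) := by linarith
  have hlt : ((k - m : ℤ) : ℝ) < 2 := by linarith
  have hone : k - m = 1 := by
    have := Int.cast_pos.mp hpos
    have : k - m < 2 := by exact_mod_cast hlt
    omega
  rw [hpair, hone, Int.cast_one]

theorem stmt_13_general {ι : Type*} [Fintype ι] [DecidableEq ι]
    (s c f : ι → ℝ) (d : ℝ) (k : ℤ)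
    (hc : ∀ i, 0 ≤ c i) (hf : ∀ i, 0 ≤ f i)
    (P : Set ((ι → ℝ) × (ι → ℝ)))
    (hP : P = {p | (∑ i, p.1 i) = d ∧ (∑ i, p.2 i) = (k : ℝ) ∧
      (∀ i, 0 ≤ p.1 i ∧ p.1 i ≤ s i * p.2 i) ∧
      (∀ i, 0 ≤ p.2 i ∧ p.2 i ≤ 1)})
    (x y : ι → ℝ) (hvx : (x, y) ∈ P.extremePoints ℝ)
    (i₁ i₂ : ι) (hne : i₁ ≠ i₂)
    (hfrac₂ : 0 < y i₂ ∧ y i₂ < 1)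
    (hint : ∀ i, i ≠ i₁ → i ≠ i₂ → y i = 0 ∨ y i = 1)
    (hss : s i₂ ≤ s i₁) :
    let x₁ := Function.update (Function.update x i₁ (x i₁ + x i₂)) i₂ 0
    let y₁ := Function.update (Function.update y i₁ 1) i₂ 0
    (∀ i, y₁ i = 0 ∨ y₁ i = 1) ∧
    (∑ i, y₁ i) = (k : ℝ) ∧
    (∀ i, 0 ≤ x₁ i ∧ x₁ i ≤ s i * y₁ i) ∧
    (∑ i, x₁ i) = d ∧
    (∑ i, c i * x₁ i) + (∑ i, f i * y₁ i) ≤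
      ((∑ i, c i * x i) + (∑ i, f i * y i)) + (c i₁ * s i₁ + f i₁) := by
  intro x₁ y₁
  obtain ⟨hxd, hyk, hxy, hy01⟩ := hP ▸ hvx.1
  have hpair := add_eq_one_of_sum_eq_int hyk hne hint (hy01 i₁) hfrac₂
  have hmerge : x i₁ + x i₂ ≤ s i₁ := calc
    x i₁ + x i₂ ≤ s i₁ * y i₁ + s i₂ * y i₂ := add_le_add (hxy i₁).2 (hxy i₂).2
    _ ≤ s i₁ * y i₁ + s i₁ * y i₂ := by gcongr; exact hfrac₂.1.le
    _ = s i₁ := by rw [← mul_add, hpair, mul_one]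
  have hsum (w g : ι → ℝ) := Fintype.sum_mul_update_update w g hne
  refine ⟨fun i => ?_, ?_, fun i => ?_, ?_, ?_⟩
  · rcases eq_or_ne i i₂ with rfl | h₂
    · simp [y₁]
    rcases eq_or_ne i i₁ with rfl | h₁
    · simp [y₁, hne]
    simpa [y₁, h₁, h₂] using hint i h₁ h₂
  · have h := hsum 1 y 1 0
    simp only [Pi.one_apply, one_mul] at h
    rw [h, hyk]
    linarith
  · rcases eq_or_ne i i₂ with rfl | h₂
    · simp [x₁, y₁]
    rcases eq_or_ne i i₁ with rfl | h₁
    · simpa [x₁, y₁, hne] using ⟨add_nonneg (hxy i).1 (hxy i₂).1, hmerge⟩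
    simpa [x₁, y₁, h₁, h₂] using hxy i
  · simpa [hxd] using hsum 1 x (x i₁ + x i₂) 0
  · rw [hsum c x, hsum f y]
    have hx₂ : x i₂ ≤ s i₁ := by linarith [(hxy i₁).1]
    linarith [mul_le_mul_of_nonneg_left hx₂ (hc i₁), mul_nonneg (hc i₂) (hxy i₂).1,
      mul_nonneg (hf i₁) (hy01 i₁).1, mul_nonneg (hf i₂) (hy01 i₂).1]

/-- Algorithm 2's branching step: rounding the two fractional components of a
vertex of the single-sink LP polytope (shipping everything to the larger
facility) yields a feasible integral solution whose cost exceeds the vertex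
cost by at most c_{i1} s_{i1} + f_{i1}. -/
theorem stmt_13 {ι : Type*} [Fintype ι] [DecidableEq ι]
    (s c f : ι → ℝ) (d : ℝ) (k : ℤ)
    (hs : ∀ i, 1 ≤ s i) (hc : ∀ i, 0 ≤ c i) (hf : ∀ i, 0 ≤ f i)
    (P : Set ((ι → ℝ) × (ι → ℝ)))
    (hP : P = {p | (∑ i, p.1 i) = d ∧ (∑ i, p.2 i) = (k : ℝ) ∧
      (∀ i, 0 ≤ p.1 i ∧ p.1 i ≤ s i * p.2 i) ∧
      (∀ i, 0 ≤ p.2 i ∧ p.2 i ≤ 1)})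
    (x y : ι → ℝ) (hvx : (x, y) ∈ P.extremePoints ℝ)
    (i₁ i₂ : ι) (hne : i₁ ≠ i₂)
    (hfrac₁ : 0 < y i₁ ∧ y i₁ < 1) (hfrac₂ : 0 < y i₂ ∧ y i₂ < 1)
    (hint : ∀ i, i ≠ i₁ → i ≠ i₂ → y i = 0 ∨ y i = 1)
    (hss : s i₂ ≤ s i₁) :
    let x₁ := Function.update (Function.update x i₁ (x i₁ + x i₂)) i₂ 0
    let y₁ := Function.update (Function.update y i₁ 1) i₂ 0
    (∀ i, y₁ i = 0 ∨ y₁ i = 1) ∧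
    (∑ i, y₁ i) = (k : ℝ) ∧
    (∀ i, 0 ≤ x₁ i ∧ x₁ i ≤ s i * y₁ i) ∧
    (∑ i, x₁ i) = d ∧
    (∑ i, c i * x₁ i) + (∑ i, f i * y₁ i) ≤
      ((∑ i, c i * x i) + (∑ i, f i * y i)) + (c i₁ * s i₁ + f i₁) :=
  stmt_13_general s c f d k hc hf P hP x y hvx i₁ i₂ hne hfrac₂ hint hss
end

section
/- Suppose nonnegative reals satisfy OPT(I₀) ≥ OPT(I₁) + k·f, COST(x',y') ≤ β·OPT(I₁), OPT(I₂) ≤ OPT(I₀) + COST(x',y'), and COST(x*,y*) ≤ COST(x',y') + OPT(I₂) + δ·k·f, where β ≥ 1, δ ≥ 1, f ≥ 0, k ≥ 1. Then COST(x*,y*) ≤ (1 + 2β)(OPT(I₀) − k·f) + (δ + 1)·k·f, and consequently COST(x*,y*) ≤ max{2β + 1, δ + 1}·OPT(I₀). -/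
theorem mul_add_mul_le_max_mul_add {R : Type*} [Semiring R] [LinearOrder R] [IsOrderedRing R]
    (p q : R) {a b : R} (ha : 0 ≤ a) (hb : 0 ≤ b) :
    p * a + q * b ≤ max p q * (a + b) := by
  rw [mul_add]
  gcongr
  exacts [le_max_left p q, le_max_right p q]

theorem stmt_15_general (OPT0 OPT1 OPT2 COST' COSTstar β δ k f : ℝ)
    (hOPT1 : 0 ≤ OPT1)
    (hβ : 1 ≤ β) (hk : 1 ≤ k) (hf : 0 ≤ f)
    (h1 : OPT1 + k * f ≤ OPT0)
    (h2 : COST' ≤ β * OPT1)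
    (h3 : OPT2 ≤ OPT0 + COST')
    (h4 : COSTstar ≤ COST' + OPT2 + δ * k * f) :
    COSTstar ≤ (1 + 2 * β) * (OPT0 - k * f) + (δ + 1) * (k * f) ∧
      COSTstar ≤ max (2 * β + 1) (δ + 1) * OPT0 := by
  have hkf : 0 ≤ k * f := mul_nonneg (by linarith) hf
  have hOPT1_le : OPT1 ≤ OPT0 - k * f := by linarith
  have chain : COSTstar ≤ (1 + 2 * β) * (OPT0 - k * f) + (δ + 1) * (k * f) :=
    calc COSTstar ≤ COST' + OPT2 + δ * k * f := h4
      _ ≤ OPT0 + 2 * COST' + δ * (k * f) := by linarith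
      _ ≤ OPT0 + 2 * (β * (OPT0 - k * f)) + δ * (k * f) := by
        gcongr
        exact h2.trans (mul_le_mul_of_nonneg_left hOPT1_le (by linarith))
      _ = (1 + 2 * β) * (OPT0 - k * f) + (δ + 1) * (k * f) := by ring
  refine ⟨chain, chain.trans ?_⟩
  calc (1 + 2 * β) * (OPT0 - k * f) + (δ + 1) * (k * f)
      ≤ max (2 * β + 1) (δ + 1) * (OPT0 - k * f + k * f) := by
        rw [add_comm 1]
        exact mul_add_mul_le_max_mul_add _ _ (hOPT1.trans hOPT1_le) hkf
    _ = max (2 * β + 1) (δ + 1) * OPT0 := by ring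

/-- Cost-chaining inequality from Theorem 6's proof: a (β,δ)-approximation for
k-median yields a max{2β+1, δ+1}-approximation for CFL with uniform opening cost. -/
theorem stmt_15 (OPT0 OPT1 OPT2 COST' COSTstar β δ k f : ℝ)
    (hOPT0 : 0 ≤ OPT0) (hOPT1 : 0 ≤ OPT1) (hOPT2 : 0 ≤ OPT2)
    (hC' : 0 ≤ COST') (hCs : 0 ≤ COSTstar)
    (hβ : 1 ≤ β) (hδ : 1 ≤ δ) (hk : 1 ≤ k) (hf : 0 ≤ f)
    (h1 : OPT1 + k * f ≤ OPT0)
    (h2 : COST' ≤ β * OPT1)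
    (h3 : OPT2 ≤ OPT0 + COST')
    (h4 : COSTstar ≤ COST' + OPT2 + δ * k * f) :
    COSTstar ≤ (1 + 2 * β) * (OPT0 - k * f) + (δ + 1) * (k * f) ∧
      COSTstar ≤ max (2 * β + 1) (δ + 1) * OPT0 :=
  stmt_15_general OPT0 OPT1 OPT2 COST' COSTstar β δ k f hOPT1 hβ hk hf h1 h2 h3 h4
end

section
/- If the scaled optimum satisfies Scaled_cost(x,y) ≤ ∑_{i∈F₁*} ⌊C_i/W⌋ + x*_{t⁰} c_{t⁰}/W + f_{t⁰}/W, and Cost(x,y) ≤ W·Scaled_cost(x,y) + kW, and W = ε·C⁰/k with C⁰ ≤ OPT, where OPT = ∑_{i∈F₁*} C_i + x*_{t⁰} c_{t⁰} + f_{t⁰}, then Cost(x,y) ≤ (1 + ε)·OPT. -/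
open Finset

theorem mul_sum_floor_div_le {ι : Type*} (s : Finset ι) (f : ι → ℝ) {W : ℝ} (hW : 0 < W) :
    W * ∑ i ∈ s, (⌊f i / W⌋ : ℝ) ≤ ∑ i ∈ s, f i := by
  rw [mul_sum]
  refine sum_le_sum fun i _ => ?_
  calc W * ⌊f i / W⌋ ≤ W * (f i / W) := mul_le_mul_of_nonneg_left (Int.floor_le _) hW.le
    _ = f i := mul_div_cancel₀ _ hW.ne'

theorem stmt_18_general {ι : Type*} (F₁s : Finset ι) (C : ι → ℝ) (xt ct ft ε C0 W : ℝ)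
    (k : ℕ) (Scaled Cost : ℝ)
    (hε : 0 < ε) (hk : 1 ≤ k)
    (hC0pos : 0 < C0)
    (hC0 : C0 ≤ (∑ i ∈ F₁s, C i) + xt * ct + ft)
    (hW : W = ε * C0 / k)
    (hScaled : Scaled ≤ (∑ i ∈ F₁s, (⌊C i / W⌋ : ℝ)) + xt * (ct / W) + ft / W)
    (hCost : Cost ≤ W * Scaled + k * W) :
    Cost ≤ (1 + ε) * ((∑ i ∈ F₁s, C i) + xt * ct + ft) := by
  have hk0 : (0 : ℝ) < k := by exact_mod_cast hk
  have hWpos : 0 < W := by rw [hW]; positivity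
  have hkW : k * W = ε * C0 := by rw [hW]; field_simp
  have hrounding : W * Scaled ≤ (∑ i ∈ F₁s, C i) + xt * ct + ft :=
    calc W * Scaled ≤ W * ((∑ i ∈ F₁s, (⌊C i / W⌋ : ℝ)) + xt * (ct / W) + ft / W) :=
          mul_le_mul_of_nonneg_left hScaled hWpos.le
      _ = W * ∑ i ∈ F₁s, (⌊C i / W⌋ : ℝ) + xt * ct + ft := by field_simp
      _ ≤ (∑ i ∈ F₁s, C i) + xt * ct + ft := by
          gcongr; exact mul_sum_floor_div_le F₁s C hWpos
  calc Cost ≤ W * Scaled + k * W := hCost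
    _ ≤ ((∑ i ∈ F₁s, C i) + xt * ct + ft) + ε * ((∑ i ∈ F₁s, C i) + xt * ct + ft) := by
        rw [hkW]; gcongr
    _ = (1 + ε) * ((∑ i ∈ F₁s, C i) + xt * ct + ft) := by ring

/-- Accuracy analysis of the FPTAS: if the scaled optimum is at most the scaled
cost of an optimal solution, then the returned cost is within (1+ε) of OPT. -/
theorem stmt_18 {ι : Type*} (F₁s : Finset ι) (C : ι → ℝ) (xt ct ft ε C0 W : ℝ)
    (k : ℕ) (Scaled Cost : ℝ)
    (hC : ∀ i ∈ F₁s, 0 ≤ C i) (hx : 0 ≤ xt) (hc : 0 ≤ ct) (hf : 0 ≤ ft)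
    (hε : 0 < ε) (hk : 1 ≤ k)
    (hC0pos : 0 < C0)
    (hC0 : C0 ≤ (∑ i ∈ F₁s, C i) + xt * ct + ft)
    (hW : W = ε * C0 / k)
    (hScaled : Scaled ≤ (∑ i ∈ F₁s, (⌊C i / W⌋ : ℝ)) + xt * (ct / W) + ft / W)
    (hCost : Cost ≤ W * Scaled + k * W) :
    Cost ≤ (1 + ε) * ((∑ i ∈ F₁s, C i) + xt * ct + ft) :=
  stmt_18_general F₁s C xt ct ft ε C0 W k Scaled Cost hε hk hC0pos hC0 hW hScaled hCost
end
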